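/- arXiv:1108.0344 — 8 statements merged into one kernel-verified Lean document; each statement's English description precedes it below -/
import Mathlib

section
/- Let λ = m + ξ + it where m ∈ 2ℤ (an even integer), ξ, t ∈ ℝ with |ξ| < 1 and ξ² + t² > 0 (so that λ ∉ 2ℤ). Then a(λ) := Σ_{k ∈ 2ℤ} 1/|λ − k|² satisfies a(λ) ≤ 1/(ξ² + t²) + 8/(1 + 2|t|). -/
open Complex Real

/-!
Shifting by `m` reduces the sum to `Σ_{j ∈ ℤ} 1/((ξ - 2j)² + t²)`. The term `j = 0` is
`1/(ξ² + t²)`. For `j ≠ 0` we have `|ξ - 2j| ≥ 2|j| - 1`, and `(a + b)² ≤ 2(a² + b²)` bounds the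
term by `2/(2|j| - 1 + |t|)²`. With `|j| = n + 1` these bounds are dominated by the telescoping
differences of `4/(4n + 1 + 2|t|)`, so each sign of `j` contributes at most `4/(1 + 2|t|)`.
-/

lemma sum_range_two_div_sq_le {s : ℝ} (hs : 0 ≤ s) (N : ℕ) :
    ∑ n ∈ Finset.range N, 2 / (2 * (n : ℝ) + 1 + s) ^ 2 ≤ 4 / (1 + 2 * s) := by
  set h : ℕ → ℝ := fun n ↦ 4 / (4 * n + 1 + 2 * s)
  have hstep (n : ℕ) : 2 / (2 * (n : ℝ) + 1 + s) ^ 2 ≤ h n - h (n + 1) := by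
    simp only [h, Nat.cast_add_one]
    rw [div_sub_div _ _ (by positivity) (by positivity),
      div_le_div_iff₀ (by positivity) (by positivity)]
    nlinarith [sq_nonneg (4 * (n : ℝ) + 2 * s + 1)]
  calc ∑ n ∈ Finset.range N, 2 / (2 * (n : ℝ) + 1 + s) ^ 2
      ≤ ∑ n ∈ Finset.range N, (h n - h (n + 1)) := Finset.sum_le_sum fun n _ ↦ hstep n
    _ = h 0 - h N := Finset.sum_range_sub' h N
    _ ≤ 4 / (1 + 2 * s) := by simp only [h]; norm_num; positivity

lemma one_div_sq_add_sq_le_two_div_sq {ξ : ℝ} (hξ : ξ < 1) (t : ℝ) (n : ℕ) :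
    1 / ((ξ - 2 * (n + 1)) ^ 2 + t ^ 2) ≤ 2 / (2 * (n : ℝ) + 1 + |t|) ^ 2 := by
  have hdist : 2 * (n : ℝ) + 1 ≤ 2 * (n + 1) - ξ := by linarith
  have hn : (0 : ℝ) ≤ n := n.cast_nonneg
  rw [div_le_div_iff₀ (by nlinarith) (by positivity)]
  nlinarith [sq_abs t, abs_nonneg t, sq_nonneg (2 * (n + 1) - ξ - |t|)]

lemma summable_one_div_sq_add_sq {ξ : ℝ} (hξ : ξ < 1) (t : ℝ) :
    Summable fun n : ℕ ↦ 1 / ((ξ - 2 * (n + 1)) ^ 2 + t ^ 2) :=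
  .of_nonneg_of_le (fun n ↦ by positivity) (one_div_sq_add_sq_le_two_div_sq hξ t)
    (summable_of_sum_range_le (fun n ↦ by positivity) (sum_range_two_div_sq_le (abs_nonneg t)))

lemma tsum_one_div_sq_add_sq_le {ξ : ℝ} (hξ : ξ < 1) (t : ℝ) :
    ∑' n : ℕ, 1 / ((ξ - 2 * (n + 1)) ^ 2 + t ^ 2) ≤ 4 / (1 + 2 * |t|) :=
  Real.tsum_le_of_sum_range_le (fun n ↦ by positivity) fun N ↦
    (Finset.sum_le_sum fun n _ ↦ one_div_sq_add_sq_le_two_div_sq hξ t n).trans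
      (sum_range_two_div_sq_le (abs_nonneg t) N)

theorem tsum_int_one_div_sq_add_sq_le {ξ : ℝ} (hξ : |ξ| < 1) (t : ℝ) :
    ∑' j : ℤ, 1 / ((ξ - 2 * j) ^ 2 + t ^ 2) ≤ 1 / (ξ ^ 2 + t ^ 2) + 8 / (1 + 2 * |t|) := by
  obtain ⟨hξ_neg, hξ_pos⟩ := abs_lt.mp hξ
  set f : ℤ → ℝ := fun j ↦ 1 / ((ξ - 2 * j) ^ 2 + t ^ 2)
  have hf_zero : f 0 = 1 / (ξ ^ 2 + t ^ 2) := by simp [f]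
  have hf_pos (n : ℕ) : f ↑(n + 1) = 1 / ((ξ - 2 * (n + 1)) ^ 2 + t ^ 2) := by simp [f]
  have hf_neg (n : ℕ) : f (-(n + 1)) = 1 / ((-ξ - 2 * (n + 1)) ^ 2 + t ^ 2) := by
    simp only [f]; push_cast; ring_nf
  have hnat : Summable fun n : ℕ ↦ f n := by
    rw [← summable_nat_add_iff 1]
    simpa only [hf_pos] using summable_one_div_sq_add_sq hξ_pos t
  have hneg : Summable fun n : ℕ ↦ f (-(n + 1)) := by
    simpa only [hf_neg] using summable_one_div_sq_add_sq (ξ := -ξ) (by linarith) t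
  rw [tsum_of_nat_of_neg_add_one hnat hneg, hnat.tsum_eq_zero_add]
  simp only [hf_pos, hf_neg, Nat.cast_zero, hf_zero]
  have h_right := tsum_one_div_sq_add_sq_le hξ_pos t
  have h_left := tsum_one_div_sq_add_sq_le (ξ := -ξ) (by linarith) t
  have h_double : 4 / (1 + 2 * |t|) + 4 / (1 + 2 * |t|) = 8 / (1 + 2 * |t|) := by ring
  linarith

theorem stmt0_general (m : ℤ) (hm : Even m) (ξ t : ℝ) (hξ : |ξ| < 1) :
    (∑' k : ℤ, 1 / ‖((m : ℂ) + ξ + t * Complex.I) - 2 * k‖ ^ 2) ≤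
      1 / (ξ ^ 2 + t ^ 2) + 8 / (1 + 2 * |t|) := by
  obtain ⟨m₀, rfl⟩ := hm
  rw [← (Equiv.addRight m₀).tsum_eq]
  convert tsum_int_one_div_sq_add_sq_le hξ t using 3 with j
  have hz : ((m₀ + m₀ : ℤ) : ℂ) + ξ + t * I - 2 * ((j + m₀ : ℤ) : ℂ) =
      ((ξ - 2 * j : ℝ) : ℂ) + t * I := by
    push_cast; ring
  rw [Equiv.coe_addRight, hz, Complex.sq_norm, Complex.normSq_add_mul_I]

/-- For `λ = m + ξ + it` with `m` an even integer, `|ξ| < 1` and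
`ξ² + t² > 0` (so that `λ ∉ 2ℤ`), the sum `a(λ) = Σ_{k ∈ 2ℤ} 1/|λ - k|²` satisfies
`a(λ) ≤ 1/(ξ² + t²) + 8/(1 + 2|t|)`. -/
theorem stmt0 (m : ℤ) (hm : Even m) (ξ t : ℝ) (hξ : |ξ| < 1) (hpos : 0 < ξ ^ 2 + t ^ 2) :
    (∑' k : ℤ, 1 / ‖((m : ℂ) + ξ + t * Complex.I) - 2 * k‖ ^ 2) ≤
      1 / (ξ ^ 2 + t ^ 2) + 8 / (1 + 2 * |t|) :=
  stmt0_general m hm ξ t hξ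
end

section
/- Let f, g : [0,π] → ℂ be continuous, and define F(x) = α₁ e^{iτ₁(π−x)} f(π−x) + β₁ e^{iτ₂(π−x)} g(π−x) and G(x) = α₂ e^{iτ₁x} f(x) + β₂ e^{iτ₂x} g(x). Then the pair (F, G) satisfies the boundary conditions F(0) + b·F(π) + a·G(0) = 0 and d·F(π) + c·G(0) + G(π) = 0 if and only if (f, g) satisfies the periodic boundary conditions f(0) = f(π) and g(0) = g(π). -/
/-!
Evaluating the transform at the endpoints gives `F(π), G(0)` as the vectors `α, β` weighted
by `f(0), g(0)`, and `F(0), G(π)` the same with the weights `z₁ f(π), z₂ g(π)`, because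
`e^{iπτⱼ} = zⱼ`. Since `α, β` are eigenvectors of `[[b, a], [d, c]]` for `-z₁, -z₂`, the two
boundary forms collapse to the components of `z₁ (f(π) - f(0)) α + z₂ (g(π) - g(0)) β`, which
vanish exactly when both coefficients do, as `α, β` are linearly independent and `zⱼ ≠ 0`.
-/

open Complex Real

theorem pair_eq_zero_iff_of_det_ne_zero {R : Type*} [CommRing R] [IsDomain R]
    {α₁ α₂ β₁ β₂ : R} (hdet : α₁ * β₂ - α₂ * β₁ ≠ 0) {u v : R} :
    (α₁ * u + β₁ * v = 0 ∧ α₂ * u + β₂ * v = 0) ↔ (u = 0 ∧ v = 0) := by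
  refine ⟨fun ⟨h₁, h₂⟩ => ⟨?_, ?_⟩, fun ⟨hu, hv⟩ => by simp [hu, hv]⟩
  · refine (mul_eq_zero.1 ?_).resolve_left hdet
    linear_combination β₂ * h₁ - β₁ * h₂
  · refine (mul_eq_zero.1 ?_).resolve_left hdet
    linear_combination α₁ * h₂ - α₂ * h₁

section BoundaryForms

variable {R : Type*} [CommRing R] {a b c d z₁ z₂ α₁ α₂ β₁ β₂ : R}

theorem first_boundary_form_eq (hα₁ : b * α₁ + a * α₂ = -z₁ * α₁)
    (hβ₁ : b * β₁ + a * β₂ = -z₂ * β₁) (f₀ f₁ g₀ g₁ : R) :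
    (α₁ * z₁ * f₁ + β₁ * z₂ * g₁) + b * (α₁ * f₀ + β₁ * g₀) + a * (α₂ * f₀ + β₂ * g₀)
      = α₁ * (z₁ * (f₁ - f₀)) + β₁ * (z₂ * (g₁ - g₀)) := by
  linear_combination f₀ * hα₁ + g₀ * hβ₁

theorem second_boundary_form_eq (hα₂ : d * α₁ + c * α₂ = -z₁ * α₂)
    (hβ₂ : d * β₁ + c * β₂ = -z₂ * β₂) (f₀ f₁ g₀ g₁ : R) :
    d * (α₁ * f₀ + β₁ * g₀) + c * (α₂ * f₀ + β₂ * g₀) + (α₂ * z₁ * f₁ + β₂ * z₂ * g₁)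
      = α₂ * (z₁ * (f₁ - f₀)) + β₂ * (z₂ * (g₁ - g₀)) := by
  linear_combination f₀ * hα₂ + g₀ * hβ₂

end BoundaryForms

theorem stmt3_general (a b c d z₁ z₂ τ₁ τ₂ α₁ α₂ β₁ β₂ : ℂ)
    (hτ₁ : Complex.exp (Complex.I * Real.pi * τ₁) = z₁)
    (hτ₂ : Complex.exp (Complex.I * Real.pi * τ₂) = z₂)
    (hα₁ : b * α₁ + a * α₂ = -z₁ * α₁) (hα₂ : d * α₁ + c * α₂ = -z₁ * α₂)
    (hβ₁ : b * β₁ + a * β₂ = -z₂ * β₁) (hβ₂ : d * β₁ + c * β₂ = -z₂ * β₂)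
    (hdet : α₁ * β₂ - α₂ * β₁ ≠ 0)
    (f g : ℝ → ℂ)
    (F G : ℝ → ℂ)
    (hF : ∀ x, F x = α₁ * Complex.exp (Complex.I * τ₁ * ((Real.pi : ℂ) - x)) * f (Real.pi - x)
        + β₁ * Complex.exp (Complex.I * τ₂ * ((Real.pi : ℂ) - x)) * g (Real.pi - x))
    (hG : ∀ x, G x = α₂ * Complex.exp (Complex.I * τ₁ * x) * f x
        + β₂ * Complex.exp (Complex.I * τ₂ * x) * g x) :
    (F 0 + b * F Real.pi + a * G 0 = 0 ∧ d * F Real.pi + c * G 0 + G Real.pi = 0) ↔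
      (f 0 = f Real.pi ∧ g 0 = g Real.pi) := by
  rw [mul_right_comm] at hτ₁ hτ₂
  have hF0 : F 0 = α₁ * z₁ * f π + β₁ * z₂ * g π := by
    simp only [hF, ofReal_zero, sub_zero, hτ₁, hτ₂]
  have hFπ : F π = α₁ * f 0 + β₁ * g 0 := by simp [hF]
  have hG0 : G 0 = α₂ * f 0 + β₂ * g 0 := by simp [hG]
  have hGπ : G π = α₂ * z₁ * f π + β₂ * z₂ * g π := by
    simp only [hG, hτ₁, hτ₂]
  rw [hF0, hFπ, hG0, hGπ, first_boundary_form_eq hα₁ hβ₁, second_boundary_form_eq hα₂ hβ₂,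
    pair_eq_zero_iff_of_det_ne_zero hdet]
  have hz₁ : z₁ ≠ 0 := hτ₁ ▸ exp_ne_zero _
  have hz₂ : z₂ ≠ 0 := hτ₂ ▸ exp_ne_zero _
  simp only [mul_eq_zero, hz₁, hz₂, false_or, sub_eq_zero, eq_comm (a := f π),
    eq_comm (a := g π)]

/-- In the setting of strictly regular or periodic type boundary
conditions, with `F, G` obtained from continuous `f, g` by the transform `A`, the pair
`(F, G)` satisfies the boundary conditions `F(0) + b·F(π) + a·G(0) = 0`,
`d·F(π) + c·G(0) + G(π) = 0` if and only if `(f, g)` satisfies the periodic boundary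
conditions `f(0) = f(π)`, `g(0) = g(π)`. -/
theorem stmt3 (a b c d z₁ z₂ τ₁ τ₂ α₁ α₂ β₁ β₂ : ℂ)
    (hreg : b * c - a * d ≠ 0)
    (hz₁ : z₁ ^ 2 + (b + c) * z₁ + (b * c - a * d) = 0)
    (hz₂ : z₂ ^ 2 + (b + c) * z₂ + (b * c - a * d) = 0)
    (hτ₁ : Complex.exp (Complex.I * Real.pi * τ₁) = z₁)
    (hτ₂ : Complex.exp (Complex.I * Real.pi * τ₂) = z₂)
    (hα₁ : b * α₁ + a * α₂ = -z₁ * α₁) (hα₂ : d * α₁ + c * α₂ = -z₁ * α₂)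
    (hβ₁ : b * β₁ + a * β₂ = -z₂ * β₁) (hβ₂ : d * β₁ + c * β₂ = -z₂ * β₂)
    (hdet : α₁ * β₂ - α₂ * β₁ ≠ 0)
    (f g : ℝ → ℂ)
    (hf : ContinuousOn f (Set.Icc 0 Real.pi)) (hg : ContinuousOn g (Set.Icc 0 Real.pi))
    (F G : ℝ → ℂ)
    (hF : ∀ x, F x = α₁ * Complex.exp (Complex.I * τ₁ * ((Real.pi : ℂ) - x)) * f (Real.pi - x)
        + β₁ * Complex.exp (Complex.I * τ₂ * ((Real.pi : ℂ) - x)) * g (Real.pi - x))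
    (hG : ∀ x, G x = α₂ * Complex.exp (Complex.I * τ₁ * x) * f x
        + β₂ * Complex.exp (Complex.I * τ₂ * x) * g x) :
    (F 0 + b * F Real.pi + a * G 0 = 0 ∧ d * F Real.pi + c * G 0 + G Real.pi = 0) ↔
      (f 0 = f Real.pi ∧ g 0 = g Real.pi) :=
  stmt3_general a b c d z₁ z₂ τ₁ τ₂ α₁ α₂ β₁ β₂ hτ₁ hτ₂ hα₁ hα₂ hβ₁ hβ₂ hdet f g F G hF hG
end

section
/- There exists a constant C > 0, depending only on the boundary data (a, b, c, d, τ₁, τ₂, α's, β's, α′'s, β′'s), such that for all P, Q ∈ L²([0,π]) the following holds: for each η, ν ∈ {1,2} there is a sequence w^{ην} : 2ℤ → ℂ with ⟨V φ_k^ν, φ̃_j^η⟩ = w^{ην}(j + k) for all j, k ∈ 2ℤ, and Σ_{m∈2ℤ} |w^{ην}(m)|² ≤ C²·(‖P‖² + ‖Q‖²), where V(y₁, y₂) = (P·y₂, Q·y₁) and ‖P‖² = (1/π)∫₀^π |P(x)|² dx. In particular, the matrix elements of V in the basis {φ_k^ν} depend only on the sum j + k of the indices. -/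
/-!
Substituting the explicit exponentials, the frequencies `e^{2ikx}` of `φ_k^ν` and `e^{2ijx}` of
`φ̃_j^η` combine, so that `⟨V φ_k^ν, φ̃_j^η⟩ = ĉ(P u)(-(j + k)) + ĉ(Q v)(j + k)`, where `ĉ` are the
Fourier coefficients on `[0, π]` with respect to `e^{2imx}` and `u`, `v` are continuous weights
determined by the data alone. By Parseval's identity on `[0, π]` the squares of this sequence sum
to at most `2 K² (‖P‖² + ‖Q‖²)`, where `K` bounds the (finitely many) weights on `[0, π]`.
-/

open MeasureTheory Complex Real

/-- The eigenfunctions `φ_k^ν` (here `k ∈ ℤ` labels the even integer `2k`):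
`φ_k¹(x) = (α₁ e^{iτ₁(π−x)} e^{−i(2k)x}, α₂ e^{iτ₁x} e^{i(2k)x})` and
`φ_k²(x) = (β₁ e^{iτ₂(π−x)} e^{−i(2k)x}, β₂ e^{iτ₂x} e^{i(2k)x})`. -/
noncomputable def phi (α₁ α₂ β₁ β₂ τ₁ τ₂ : ℂ) (ν : Fin 2) (k : ℤ) (x : ℝ) : ℂ × ℂ :=
  if ν = 0 then
    (α₁ * Complex.exp (Complex.I * τ₁ * ((Real.pi : ℂ) - x)) *
        Complex.exp (-Complex.I * (2 * k : ℤ) * x),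
     α₂ * Complex.exp (Complex.I * τ₁ * x) * Complex.exp (Complex.I * (2 * k : ℤ) * x))
  else
    (β₁ * Complex.exp (Complex.I * τ₂ * ((Real.pi : ℂ) - x)) *
        Complex.exp (-Complex.I * (2 * k : ℤ) * x),
     β₂ * Complex.exp (Complex.I * τ₂ * x) * Complex.exp (Complex.I * (2 * k : ℤ) * x))

/-- The biorthogonal functions `φ̃_j^η` (here `j ∈ ℤ` labels the even integer `2j`). -/
noncomputable def phit (α₁' α₂' β₁' β₂' τ₁ τ₂ : ℂ) (η : Fin 2) (j : ℤ) (x : ℝ) : ℂ × ℂ :=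
  if η = 0 then
    ((starRingEnd ℂ) α₁' * Complex.exp (Complex.I * (starRingEnd ℂ) τ₁ * ((Real.pi : ℂ) - x)) *
        Complex.exp (-Complex.I * (2 * j : ℤ) * x),
     (starRingEnd ℂ) α₂' * Complex.exp (Complex.I * (starRingEnd ℂ) τ₁ * x) *
        Complex.exp (Complex.I * (2 * j : ℤ) * x))
  else
    ((starRingEnd ℂ) β₁' * Complex.exp (Complex.I * (starRingEnd ℂ) τ₂ * ((Real.pi : ℂ) - x)) *
        Complex.exp (-Complex.I * (2 * j : ℤ) * x),
     (starRingEnd ℂ) β₂' * Complex.exp (Complex.I * (starRingEnd ℂ) τ₂ * x) *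
        Complex.exp (Complex.I * (2 * j : ℤ) * x))

open Set ComplexConjugate

theorem norm_add_sq_le_two_mul {E : Type*} [SeminormedAddGroup E] (x y : E) :
    ‖x + y‖ ^ 2 ≤ 2 * (‖x‖ ^ 2 + ‖y‖ ^ 2) :=
  (pow_le_pow_left₀ (norm_nonneg _) (norm_add_le x y) 2).trans add_sq_le

theorem MeasureTheory.MemLp.mul_of_norm_le {α R : Type*} [MeasurableSpace α] [NormedRing R]
    {μ : Measure α} {f u : α → R} {K : ℝ} {p : ENNReal} (hf : MemLp f p μ)
    (hu : AEStronglyMeasurable u μ) (hK : ∀ᵐ x ∂μ, ‖u x‖ ≤ K) : MemLp (fun x => f x * u x) p μ :=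
  hf.of_le_mul (hf.1.mul hu) <| hK.mono fun x hx =>
    calc ‖f x * u x‖ ≤ ‖f x‖ * ‖u x‖ := norm_mul_le _ _
      _ ≤ K * ‖f x‖ := by rw [mul_comm]; exact mul_le_mul_of_nonneg_right hx (norm_nonneg _)

section FourierCoeffOn

variable {a b : ℝ}

theorem MeasureTheory.MemLp.intervalIntegrable {E : Type*} [NormedAddCommGroup E] {p : ENNReal}
    (hp : 1 ≤ p) (hab : a ≤ b) {f : ℝ → E} (hf : MemLp f p (volume.restrict (Ioc a b))) :
    IntervalIntegrable f volume a b :=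
  (intervalIntegrable_iff_integrableOn_Ioc_of_le hab).2 (hf.integrable hp)

theorem intervalIntegral_norm_mul_sq_le (hab : a ≤ b) {f u : ℝ → ℂ} {K : ℝ}
    (hf : MemLp f 2 (volume.restrict (Ioc a b)))
    (hfu : MemLp (fun x => f x * u x) 2 (volume.restrict (Ioc a b)))
    (hK : ∀ x ∈ Icc a b, ‖u x‖ ≤ K) :
    ∫ x in a..b, ‖f x * u x‖ ^ 2 ≤ K ^ 2 * ∫ x in a..b, ‖f x‖ ^ 2 := by
  have hint {g : ℝ → ℂ} (hg : MemLp g 2 (volume.restrict (Ioc a b))) :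
      IntervalIntegrable (fun x => ‖g x‖ ^ 2) volume a b :=
    (intervalIntegrable_iff_integrableOn_Ioc_of_le hab).2 (hg.integrable_norm_pow two_ne_zero)
  rw [← intervalIntegral.integral_const_mul]
  refine intervalIntegral.integral_mono_on hab (hint hfu) ((hint hf).const_mul _) fun x hx => ?_
  rw [norm_mul, mul_pow, mul_comm]
  gcongr
  exact hK x hx

theorem fourierCoeffOn_neg_add_fourierCoeffOn (hab : a < b) {f g : ℝ → ℂ}
    (hf : IntervalIntegrable f volume a b) (hg : IntervalIntegrable g volume a b) (m : ℤ) :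
    fourierCoeffOn hab f (-m) + fourierCoeffOn hab g m =
      (1 / (b - a)) • ∫ x in a..b,
        (f x * fourier m (x : AddCircle (b - a)) + g x * fourier (-m) (x : AddCircle (b - a))) := by
  have hcont (n : ℤ) : Continuous fun x : ℝ => fourier n (x : AddCircle (b - a)) :=
    (fourier n).continuous.comp (AddCircle.continuous_mk' _)
  simp only [fourierCoeffOn_eq_integral _ _ hab, neg_neg, smul_eq_mul]
  rw [← smul_add, ← intervalIntegral.integral_add (hf.continuousOn_mul (hcont m).continuousOn)
    (hg.continuousOn_mul (hcont (-m)).continuousOn)]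
  simp only [mul_comm]

theorem summable_sq_fourierCoeffOn_neg_add_and_tsum_le (hab : a < b) {f g : ℝ → ℂ}
    (hf : MemLp f 2 (volume.restrict (Ioc a b))) (hg : MemLp g 2 (volume.restrict (Ioc a b))) :
    Summable (fun m : ℤ => ‖fourierCoeffOn hab f (-m) + fourierCoeffOn hab g m‖ ^ 2) ∧
      ∑' m : ℤ, ‖fourierCoeffOn hab f (-m) + fourierCoeffOn hab g m‖ ^ 2 ≤
        2 * ((b - a)⁻¹ * (∫ x in a..b, ‖f x‖ ^ 2) + (b - a)⁻¹ * ∫ x in a..b, ‖g x‖ ^ 2) := by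
  have hf' : HasSum (fun m : ℤ => ‖fourierCoeffOn hab f (-m)‖ ^ 2)
      ((b - a)⁻¹ * ∫ x in a..b, ‖f x‖ ^ 2) :=
    (Equiv.neg ℤ).hasSum_iff.2 (hasSum_sq_fourierCoeffOn hab hf)
  have hg' : HasSum (fun m : ℤ => ‖fourierCoeffOn hab g m‖ ^ 2)
      ((b - a)⁻¹ * ∫ x in a..b, ‖g x‖ ^ 2) :=
    hasSum_sq_fourierCoeffOn hab hg
  have hsum := (hf'.add hg').mul_left 2
  have hle (m : ℤ) := norm_add_sq_le_two_mul (fourierCoeffOn hab f (-m)) (fourierCoeffOn hab g m)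
  have hs := Summable.of_nonneg_of_le (fun _ => by positivity) hle hsum.summable
  exact ⟨hs, hasSum_le hle hs.hasSum hsum⟩

theorem exists_sq_summable_weighted_fourier_seq (hab : a < b) {P Q u v : ℝ → ℂ} {K : ℝ}
    (hP : MemLp P 2 (volume.restrict (Ioc a b))) (hQ : MemLp Q 2 (volume.restrict (Ioc a b)))
    (hu : Continuous u) (hv : Continuous v)
    (huK : ∀ x ∈ Icc a b, ‖u x‖ ≤ K) (hvK : ∀ x ∈ Icc a b, ‖v x‖ ≤ K) :
    ∃ w : ℤ → ℂ,
      (∀ m : ℤ, (1 / (b - a)) • ∫ x in a..b,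
          (P x * u x * fourier m (x : AddCircle (b - a)) +
            Q x * v x * fourier (-m) (x : AddCircle (b - a))) = w m) ∧
      Summable (fun m : ℤ => ‖w m‖ ^ 2) ∧
      ∑' m : ℤ, ‖w m‖ ^ 2 ≤
        2 * K ^ 2 *
          ((b - a)⁻¹ * (∫ x in a..b, ‖P x‖ ^ 2) + (b - a)⁻¹ * ∫ x in a..b, ‖Q x‖ ^ 2) := by
  have hPu := hP.mul_of_norm_le hu.aestronglyMeasurable <|
    ae_restrict_of_forall_mem measurableSet_Ioc fun x hx => huK x (Ioc_subset_Icc_self hx)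
  have hQv := hQ.mul_of_norm_le hv.aestronglyMeasurable <|
    ae_restrict_of_forall_mem measurableSet_Ioc fun x hx => hvK x (Ioc_subset_Icc_self hx)
  obtain ⟨hs, hle⟩ := summable_sq_fourierCoeffOn_neg_add_and_tsum_le hab hPu hQv
  refine ⟨_, fun m => (fourierCoeffOn_neg_add_fourierCoeffOn hab
    (hPu.intervalIntegrable one_le_two hab.le) (hQv.intervalIntegrable one_le_two hab.le) m).symm,
    hs, hle.trans ?_⟩
  have hPbound := intervalIntegral_norm_mul_sq_le hab.le hP hPu huK
  have hQbound := intervalIntegral_norm_mul_sq_le hab.le hQ hQv hvK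
  calc 2 * ((b - a)⁻¹ * (∫ x in a..b, ‖P x * u x‖ ^ 2) + (b - a)⁻¹ * ∫ x in a..b, ‖Q x * v x‖ ^ 2)
      ≤ 2 * ((b - a)⁻¹ * (K ^ 2 * ∫ x in a..b, ‖P x‖ ^ 2) +
          (b - a)⁻¹ * (K ^ 2 * ∫ x in a..b, ‖Q x‖ ^ 2)) := by gcongr
    _ = _ := by ring

end FourierCoeffOn

theorem fourier_coe_apply_pi (n : ℤ) (x : ℝ) :
    fourier n (x : AddCircle (π - 0)) = Complex.exp (Complex.I * (2 * n : ℤ) * x) := by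
  rw [fourier_coe_apply, sub_zero]
  congr 1
  push_cast
  field_simp

theorem IsCompact.exists_bound_of_continuousOn_of_finite {ι X E : Type*} [Finite ι]
    [TopologicalSpace X] [SeminormedAddCommGroup E] {s : Set X} (hs : IsCompact s)
    {F : ι → X → E} (hF : ∀ i, ContinuousOn (F i) s) : ∃ K, ∀ i, ∀ x ∈ s, ‖F i x‖ ≤ K := by
  choose K hK using fun i => hs.exists_bound_of_continuousOn (hF i)
  obtain ⟨M, hM⟩ := Finite.exists_le K
  exact ⟨M, fun i x hx => (hK i x hx).trans (hM i)⟩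

noncomputable def expMode (γ₁ γ₂ σ : ℂ) (k : ℤ) (x : ℝ) : ℂ × ℂ :=
  (γ₁ * Complex.exp (Complex.I * σ * ((π : ℂ) - x)) * Complex.exp (-Complex.I * (2 * k : ℤ) * x),
   γ₂ * Complex.exp (Complex.I * σ * x) * Complex.exp (Complex.I * (2 * k : ℤ) * x))

theorem phi_eq_expMode (α₁ α₂ β₁ β₂ τ₁ τ₂ : ℂ) (ν : Fin 2) :
    phi α₁ α₂ β₁ β₂ τ₁ τ₂ ν = expMode (![α₁, β₁] ν) (![α₂, β₂] ν) (![τ₁, τ₂] ν) := by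
  fin_cases ν <;> rfl

theorem phit_eq_expMode (α₁' α₂' β₁' β₂' τ₁ τ₂ : ℂ) (η : Fin 2) :
    phit α₁' α₂' β₁' β₂' τ₁ τ₂ η =
      expMode (conj (![α₁', β₁'] η)) (conj (![α₂', β₂'] η)) (conj (![τ₁, τ₂] η)) := by
  fin_cases η <;> rfl

noncomputable def pairingWeight (γ₁ γ₂ σ γ₁' γ₂' ρ : ℂ) (x : ℝ) : ℂ × ℂ :=
  (γ₂ * γ₁' * Complex.exp (Complex.I * ρ * (x - π) + Complex.I * σ * x),
   γ₁ * γ₂' * Complex.exp (Complex.I * σ * (π - x) - Complex.I * ρ * x))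

theorem continuous_pairingWeight (γ₁ γ₂ σ γ₁' γ₂' ρ : ℂ) :
    Continuous (pairingWeight γ₁ γ₂ σ γ₁' γ₂' ρ) := by
  unfold pairingWeight
  fun_prop

theorem expMode_pairing (p q γ₁ γ₂ σ γ₁' γ₂' ρ : ℂ) (j k : ℤ) (x : ℝ) :
    p * (expMode γ₁ γ₂ σ k x).2 * conj (expMode (conj γ₁') (conj γ₂') (conj ρ) j x).1 +
      q * (expMode γ₁ γ₂ σ k x).1 * conj (expMode (conj γ₁') (conj γ₂') (conj ρ) j x).2 =
    p * (pairingWeight γ₁ γ₂ σ γ₁' γ₂' ρ x).1 * fourier (j + k) (x : AddCircle (π - 0)) +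
      q * (pairingWeight γ₁ γ₂ σ γ₁' γ₂' ρ x).2 * fourier (-(j + k)) (x : AddCircle (π - 0)) := by
  simp only [pairingWeight, fourier_coe_apply_pi, expMode, map_mul, ← Complex.exp_conj, map_sub,
    map_neg, conj_conj, conj_I, conj_ofReal, map_intCast]
  simp only [mul_sub, mul_add, add_mul, mul_neg, neg_mul, neg_neg, Int.cast_mul, Int.cast_add,
    Int.cast_neg, Int.cast_ofNat, Complex.exp_add, Complex.exp_sub, Complex.exp_neg]
  field_simp

theorem stmt4_general (τ₁ τ₂ α₁ α₂ β₁ β₂ α₁' α₂' β₁' β₂' : ℂ) :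
    ∃ C > 0, ∀ P Q : ℝ → ℂ,
      MemLp P 2 (volume.restrict (Set.Icc 0 Real.pi)) →
      MemLp Q 2 (volume.restrict (Set.Icc 0 Real.pi)) →
      ∀ η ν : Fin 2, ∃ w : ℤ → ℂ,
        (∀ j k : ℤ,
          (1 / (Real.pi : ℂ)) * ∫ x in (0 : ℝ)..Real.pi,
            (P x * (phi α₁ α₂ β₁ β₂ τ₁ τ₂ ν k x).2 *
                (starRingEnd ℂ) (phit α₁' α₂' β₁' β₂' τ₁ τ₂ η j x).1 +
             Q x * (phi α₁ α₂ β₁ β₂ τ₁ τ₂ ν k x).1 *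
                (starRingEnd ℂ) (phit α₁' α₂' β₁' β₂' τ₁ τ₂ η j x).2) = w (j + k)) ∧
        (Summable fun m : ℤ => ‖w m‖ ^ 2) ∧
        (∑' m : ℤ, ‖w m‖ ^ 2) ≤ C ^ 2 *
          ((1 / Real.pi) * (∫ x in (0 : ℝ)..Real.pi, ‖P x‖ ^ 2) +
           (1 / Real.pi) * (∫ x in (0 : ℝ)..Real.pi, ‖Q x‖ ^ 2)) := by
  let W (p : Fin 2 × Fin 2) : ℝ → ℂ × ℂ := pairingWeight (![α₁, β₁] p.2) (![α₂, β₂] p.2)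
    (![τ₁, τ₂] p.2) (![α₁', β₁'] p.1) (![α₂', β₂'] p.1) (![τ₁, τ₂] p.1)
  obtain ⟨K, hK⟩ := isCompact_Icc.exists_bound_of_continuousOn_of_finite (s := Icc 0 π) (F := W)
    fun _ => (continuous_pairingWeight _ _ _ _ _ _).continuousOn
  refine ⟨2 * |K| + 1, by positivity, fun P Q hP hQ η ν => ?_⟩
  have hIoc : volume.restrict (Ioc 0 π) ≤ volume.restrict (Icc 0 π) :=
    Measure.restrict_mono Ioc_subset_Icc_self le_rfl
  obtain ⟨w, hw, hs, hle⟩ := exists_sq_summable_weighted_fourier_seq pi_pos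
    (hP.mono_measure hIoc) (hQ.mono_measure hIoc)
    (continuous_fst.comp (continuous_pairingWeight _ _ _ _ _ _))
    (continuous_snd.comp (continuous_pairingWeight _ _ _ _ _ _))
    (fun x hx => (norm_fst_le _).trans (hK (η, ν) x hx))
    (fun x hx => (norm_snd_le _).trans (hK (η, ν) x hx))
  refine ⟨w, fun j k => ?_, hs, hle.trans ?_⟩
  · rw [← hw, phi_eq_expMode, phit_eq_expMode]
    simp only [expMode_pairing, Function.comp_apply, sub_zero, Complex.real_smul, ofReal_div,
      ofReal_one]
  · have hI (f : ℝ → ℂ) : 0 ≤ ∫ x in (0 : ℝ)..π, ‖f x‖ ^ 2 :=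
      intervalIntegral.integral_nonneg pi_pos.le fun _ _ => by positivity
    rw [sub_zero, inv_eq_one_div]
    gcongr
    · exact add_nonneg (mul_nonneg (by positivity) (hI P)) (mul_nonneg (by positivity) (hI Q))
    · nlinarith [abs_nonneg K, sq_abs K]

/-- For strictly regular boundary data there is a constant `C > 0`
(depending only on the boundary data) such that for all `P, Q ∈ L²([0,π])` and each
`η, ν ∈ {1,2}` there is a sequence `w^{ην} : 2ℤ → ℂ` with
`⟨Vφ_k^ν, φ̃_j^η⟩ = w^{ην}(j+k)` and `Σ_m |w^{ην}(m)|² ≤ C²(‖P‖² + ‖Q‖²)`,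
where `V(y₁,y₂) = (P y₂, Q y₁)`. -/
theorem stmt4 (a b c d z₁ z₂ τ₁ τ₂ α₁ α₂ β₁ β₂ α₁' α₂' β₁' β₂' : ℂ)
    (hreg : b * c - a * d ≠ 0)
    (hsr : (b - c) ^ 2 + 4 * a * d ≠ 0)
    (hz₁ : z₁ ^ 2 + (b + c) * z₁ + (b * c - a * d) = 0)
    (hz₂ : z₂ ^ 2 + (b + c) * z₂ + (b * c - a * d) = 0)
    (hzne : z₁ ≠ z₂)
    (hτ₁ : Complex.exp (Complex.I * Real.pi * τ₁) = z₁)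
    (hτ₂ : Complex.exp (Complex.I * Real.pi * τ₂) = z₂)
    (hτre : |τ₁.re - τ₂.re| ≤ 1)
    (hα₁ : b * α₁ + a * α₂ = -z₁ * α₁) (hα₂ : d * α₁ + c * α₂ = -z₁ * α₂)
    (hβ₁ : b * β₁ + a * β₂ = -z₂ * β₁) (hβ₂ : d * β₁ + c * β₂ = -z₂ * β₂)
    (hdet : α₁ * β₂ - α₂ * β₁ ≠ 0)
    (hinv₁ : α₁' * α₁ + α₂' * α₂ = 1) (hinv₂ : α₁' * β₁ + α₂' * β₂ = 0)
    (hinv₃ : β₁' * α₁ + β₂' * α₂ = 0) (hinv₄ : β₁' * β₁ + β₂' * β₂ = 1) :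
    ∃ C > 0, ∀ P Q : ℝ → ℂ,
      MemLp P 2 (volume.restrict (Set.Icc 0 Real.pi)) →
      MemLp Q 2 (volume.restrict (Set.Icc 0 Real.pi)) →
      ∀ η ν : Fin 2, ∃ w : ℤ → ℂ,
        (∀ j k : ℤ,
          (1 / (Real.pi : ℂ)) * ∫ x in (0 : ℝ)..Real.pi,
            (P x * (phi α₁ α₂ β₁ β₂ τ₁ τ₂ ν k x).2 *
                (starRingEnd ℂ) (phit α₁' α₂' β₁' β₂' τ₁ τ₂ η j x).1 +
             Q x * (phi α₁ α₂ β₁ β₂ τ₁ τ₂ ν k x).1 *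
                (starRingEnd ℂ) (phit α₁' α₂' β₁' β₂' τ₁ τ₂ η j x).2) = w (j + k)) ∧
        (Summable fun m : ℤ => ‖w m‖ ^ 2) ∧
        (∑' m : ℤ, ‖w m‖ ^ 2) ≤ C ^ 2 *
          ((1 / Real.pi) * (∫ x in (0 : ℝ)..Real.pi, ‖P x‖ ^ 2) +
           (1 / Real.pi) * (∫ x in (0 : ℝ)..Real.pi, ‖Q x‖ ^ 2)) :=
  stmt4_general τ₁ τ₂ α₁ α₂ β₁ β₂ α₁' α₂' β₁' β₂'
end

section
/- For every p ∈ (1,2) there is a constant C(p) > 0 such that: if r, g : 2ℤ → [0,∞) satisfy Σ_{k∈2ℤ} r(k)² < ∞ and Σ_{k∈2ℤ} g(k)^p < ∞, then for every even N ∈ 2ℕ one has σ₁(N) ≤ C(p)·‖r‖·‖g‖_p and σ₂(N) ≤ C(p)·‖r‖·‖g‖_p. -/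
/-!
For fixed `k`, Cauchy–Schwarz in `j` bounds the inner sum by `‖r‖ (Σ_j |j - k|⁻²)^{1/2}`, and
Hölder in `k` with the conjugate exponent `q = p / (p - 1)` then gives
`σ ≤ ‖r‖ ‖g‖_p (Σ_k (Σ_j |j - k|⁻²)^{q/2})^{1/q}`.
In both `σ₁` and `σ₂` exactly one of the even integers `j, k` lies in `[-N, N]`, so
`|j - k| ≥ d(k) := ||k| - (N + 1)| + 1` and `Σ_j |j - k|⁻² ≤ 4 / d(k)`. Each value of `d` is
taken at most four times, and `q / 2 > 1` because `p < 2`, so `Σ_k d(k)^{-q/2}` is bounded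
independently of `N`.
-/

open scoped BigOperators

/-- `σ₁(N) = Σ_{k∈2ℤ, |k|≤N} Σ_{j∈2ℤ, |j|>N} r(j+k)·g(k)/|j−k|`. -/
noncomputable def sigma1 (r g : ℤ → ℝ) (N : ℤ) : ℝ :=
  ∑' p : ℤ × ℤ, if Even p.1 ∧ Even p.2 ∧ |p.1| ≤ N ∧ N < |p.2|
    then r (p.2 + p.1) * g p.1 / (|p.2 - p.1| : ℤ) else 0

/-- `σ₂(N) = Σ_{k∈2ℤ, |k|>N} Σ_{j∈2ℤ, |j|≤N} r(j+k)·g(k)/|k−j|`. -/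
noncomputable def sigma2 (r g : ℤ → ℝ) (N : ℤ) : ℝ :=
  ∑' p : ℤ × ℤ, if Even p.1 ∧ Even p.2 ∧ N < |p.1| ∧ |p.2| ≤ N
    then r (p.2 + p.1) * g p.1 / (|p.1 - p.2| : ℤ) else 0

/-- `‖x‖ = (Σ_{k∈2ℤ} x(k)²)^{1/2}`. -/
noncomputable def evenL2Norm (x : ℤ → ℝ) : ℝ :=
  Real.sqrt (∑' k : ℤ, if Even k then x k ^ 2 else 0)

/-- `‖x‖_p = (Σ_{k∈2ℤ} x(k)^p)^{1/p}`. -/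
noncomputable def evenLpNorm (x : ℤ → ℝ) (p : ℝ) : ℝ :=
  (∑' k : ℤ, if Even k then x k ^ p else 0) ^ (1 / p)

open scoped ENNReal

theorem ENNReal.tsum_mul_le_Lp_mul_Lq {ι : Type*} {p q : ℝ} (hpq : p.HolderConjugate q)
    (f g : ι → ℝ≥0∞) :
    ∑' i, f i * g i ≤ (∑' i, f i ^ p) ^ (1 / p) * (∑' i, g i ^ q) ^ (1 / q) := by
  let _ : MeasurableSpace ι := ⊤
  simpa [MeasureTheory.lintegral_count] using
    ENNReal.lintegral_mul_le_Lp_mul_Lq MeasureTheory.Measure.count hpq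
      (Measurable.of_discrete (f := f)).aemeasurable (Measurable.of_discrete (f := g)).aemeasurable

theorem ENNReal.tsum_tsum_mul_add_le {α : Type*} [AddGroup α] {p q : ℝ}
    (hpq : p.HolderConjugate q) (R G : α → ℝ≥0∞) (K : α → α → ℝ≥0∞) :
    ∑' k, ∑' j, R (j + k) * G k * K k j ≤
      (∑' m, R m ^ (2 : ℝ)) ^ (1 / 2 : ℝ) * (∑' k, G k ^ p) ^ (1 / p) *
        (∑' k, (∑' j, K k j ^ (2 : ℝ)) ^ (q / 2)) ^ (1 / q) := by
  set A := (∑' m, R m ^ (2 : ℝ)) ^ (1 / 2 : ℝ)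
  have cauchy_schwarz (k : α) :
      ∑' j, R (j + k) * K k j ≤ A * (∑' j, K k j ^ (2 : ℝ)) ^ (1 / 2 : ℝ) := by
    have shift : ∑' j, R (j + k) ^ (2 : ℝ) = ∑' m, R m ^ (2 : ℝ) :=
      (Equiv.addRight k).tsum_eq (fun m => R m ^ (2 : ℝ))
    simpa only [shift] using ENNReal.tsum_mul_le_Lp_mul_Lq .two_two (fun j => R (j + k)) (K k)
  calc ∑' k, ∑' j, R (j + k) * G k * K k j = ∑' k, G k * ∑' j, R (j + k) * K k j := by
        simp_rw [← ENNReal.tsum_mul_left, mul_right_comm _ (G _), mul_comm (G _)]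
    _ ≤ ∑' k, G k * (A * (∑' j, K k j ^ (2 : ℝ)) ^ (1 / 2 : ℝ)) := by
        gcongr with k
        exact cauchy_schwarz k
    _ = A * ∑' k, G k * (∑' j, K k j ^ (2 : ℝ)) ^ (1 / 2 : ℝ) := by
        simp_rw [← ENNReal.tsum_mul_left, mul_left_comm]
    _ ≤ A * ((∑' k, G k ^ p) ^ (1 / p) *
          (∑' k, ((∑' j, K k j ^ (2 : ℝ)) ^ (1 / 2 : ℝ)) ^ q) ^ (1 / q)) := by
        gcongr; exact ENNReal.tsum_mul_le_Lp_mul_Lq hpq _ _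
    _ = _ := by
        simp_rw [← ENNReal.rpow_mul, one_div_mul_eq_div, mul_assoc]

theorem ENNReal.tsum_int_natAbs_le (φ : ℕ → ℝ≥0∞) :
    ∑' m : ℤ, φ m.natAbs ≤ 2 * ∑' n, φ n := by
  have h := (ENNReal.summable (f := fun m : ℤ => φ m.natAbs)).hasSum.nat_add_neg.tsum_eq
  simp only [Int.natAbs_neg, Int.natAbs_natCast, ← two_mul, ENNReal.tsum_mul_left] at h
  rw [h]
  exact le_self_add

theorem ENNReal.tsum_natAbs_abs_sub_le (φ : ℕ → ℝ≥0∞) (c : ℤ) :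
    ∑' k : ℤ, φ (|k| - c).natAbs ≤ 2 * ∑' m : ℤ, φ m.natAbs := by
  calc ∑' k : ℤ, φ (|k| - c).natAbs ≤ ∑' k : ℤ, (φ (k - c).natAbs + φ (k + c).natAbs) := by
        gcongr with k
        rcases abs_choice k with hk | hk <;> rw [hk]
        · exact le_self_add
        · rw [show -k - c = -(k + c) by ring, Int.natAbs_neg]
          exact le_add_self
    _ = 2 * ∑' m : ℤ, φ m.natAbs := by
        rw [ENNReal.tsum_add, two_mul]
        congr 1
        · exact (Equiv.subRight c).tsum_eq (fun m => φ m.natAbs)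
        · exact (Equiv.addRight c).tsum_eq (fun m => φ m.natAbs)

theorem ENNReal.tsum_inv_sq_tail_le {D : ℕ} (hD : 0 < D) :
    ∑' n : ℕ, (if D ≤ n then ((n : ℝ≥0∞) ^ 2)⁻¹ else 0) ≤ 2 / D := by
  refine ENNReal.tsum_le_of_sum_range_le fun n => ?_
  have real_bound := sum_Ioo_inv_sq_le (α := ℝ) (D - 1) n
  rw [Nat.cast_pred hD, sub_add_cancel] at real_bound
  calc ∑ i ∈ Finset.range n, (if D ≤ i then ((i : ℝ≥0∞) ^ 2)⁻¹ else 0)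
      ≤ ∑ i ∈ Finset.Ioo (D - 1) n, ((i : ℝ≥0∞) ^ 2)⁻¹ := by
        rw [Finset.sum_ite, Finset.sum_const_zero, add_zero]
        refine Finset.sum_le_sum_of_subset fun i hi => ?_
        simp only [Finset.mem_filter, Finset.mem_range, Finset.mem_Ioo] at hi ⊢
        omega
    _ = ENNReal.ofReal (∑ i ∈ Finset.Ioo (D - 1) n, ((i : ℝ) ^ 2)⁻¹) := by
        rw [ENNReal.ofReal_sum_of_nonneg fun i _ => by positivity]
        refine Finset.sum_congr rfl fun i hi => ?_
        have hi : (0 : ℝ) < i := by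
          simp only [Finset.mem_Ioo] at hi
          exact_mod_cast (by omega : 0 < i)
        rw [ENNReal.ofReal_inv_of_pos (by positivity), ENNReal.ofReal_pow hi.le,
          ENNReal.ofReal_natCast]
    _ ≤ ENNReal.ofReal (2 / D) := ENNReal.ofReal_le_ofReal real_bound
    _ = 2 / D := by
        rw [ENNReal.ofReal_div_of_pos (by exact_mod_cast hD), ENNReal.ofReal_ofNat,
          ENNReal.ofReal_natCast]

noncomputable def truncInvKernel (D : ℤ → ℕ) (k j : ℤ) : ℝ≥0∞ :=
  if D k ≤ (j - k).natAbs then ((j - k).natAbs : ℝ≥0∞)⁻¹ else 0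

theorem tsum_truncInvKernel_sq_le (D : ℤ → ℕ) {k : ℤ} (hD : 0 < D k) :
    ∑' j, truncInvKernel D k j ^ (2 : ℝ) ≤ 4 / D k := by
  set φ : ℕ → ℝ≥0∞ := fun n => if D k ≤ n then ((n : ℝ≥0∞) ^ 2)⁻¹ else 0
  have shift : ∑' j, truncInvKernel D k j ^ (2 : ℝ) = ∑' m : ℤ, φ m.natAbs := by
    rw [← (Equiv.subRight k).tsum_eq (fun m => φ m.natAbs)]
    refine tsum_congr fun j => ?_
    simp only [truncInvKernel, Equiv.subRight_apply, φ]
    split_ifs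
    · rw [ENNReal.rpow_two, ENNReal.inv_pow]
    · exact ENNReal.zero_rpow_of_pos two_pos
  calc ∑' j, truncInvKernel D k j ^ (2 : ℝ)
      ≤ 2 * ∑' n, φ n := shift ▸ ENNReal.tsum_int_natAbs_le φ
    _ ≤ 2 * (2 / D k) := by gcongr; exact ENNReal.tsum_inv_sq_tail_le hD
    _ = 4 / D k := by rw [← mul_div_assoc]; norm_num

theorem ENNReal.tsum_div_nat_succ_rpow_ne_top {s : ℝ} (hs : 1 < s) :
    ∑' n : ℕ, (4 / ((n : ℝ≥0∞) + 1)) ^ s ≠ ⊤ := by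
  have hs0 : 0 ≤ s := by linarith
  have coe_eq (n : ℕ) : (((n : ℝ≥0∞) + 1) ^ s)⁻¹ = ((((n + 1 : ℕ) : NNReal) ^ s)⁻¹ : NNReal) := by
    rw [ENNReal.coe_inv (by positivity), ENNReal.coe_rpow_of_nonneg _ hs0]
    push_cast
    rfl
  simp_rw [ENNReal.div_rpow_of_nonneg _ _ hs0, div_eq_mul_inv, ENNReal.tsum_mul_left, coe_eq]
  refine ENNReal.mul_ne_top (ENNReal.rpow_ne_top_of_nonneg hs0 ENNReal.ofNat_ne_top) ?_
  have summable : Summable fun n : ℕ => (((n + 1 : ℕ) : NNReal) ^ s)⁻¹ :=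
    (NNReal.summable_nat_add_iff (f := fun n : ℕ => ((n : NNReal) ^ s)⁻¹) 1).2
      (NNReal.summable_rpow_inv.2 hs)
  exact ENNReal.tsum_coe_ne_top_iff_summable.2 summable

def boundaryGap (c k : ℤ) : ℕ := (|k| - c).natAbs + 1

theorem tsum_rpow_tsum_truncInvKernel_sq_le (c : ℤ) {s : ℝ} (hs : 0 < s) :
    ∑' k, (∑' j, truncInvKernel (boundaryGap c) k j ^ (2 : ℝ)) ^ s ≤
      4 * ∑' n : ℕ, (4 / ((n : ℝ≥0∞) + 1)) ^ s := by
  set φ : ℕ → ℝ≥0∞ := fun n => (4 / ((n + 1 : ℕ) : ℝ≥0∞)) ^ s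
  calc ∑' k, (∑' j, truncInvKernel (boundaryGap c) k j ^ (2 : ℝ)) ^ s
      ≤ ∑' k : ℤ, φ (|k| - c).natAbs := by
        gcongr with k
        exact ENNReal.rpow_le_rpow (tsum_truncInvKernel_sq_le _ (Nat.succ_pos _)) hs.le
    _ ≤ 2 * (2 * ∑' n, φ n) := by
        grw [ENNReal.tsum_natAbs_abs_sub_le, ENNReal.tsum_int_natAbs_le]
    _ = 4 * ∑' n : ℕ, (4 / ((n : ℝ≥0∞) + 1)) ^ s := by
        simp only [φ, Nat.cast_add, Nat.cast_one, ← mul_assoc]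
        norm_num

noncomputable def evenPart (x : ℤ → ℝ) (k : ℤ) : ℝ≥0∞ :=
  if Even k then ENNReal.ofReal (x k) else 0

theorem ite_even_rpow_nonneg {x : ℤ → ℝ} (hx : ∀ k, 0 ≤ x k) (p : ℝ) (k : ℤ) :
    0 ≤ if Even k then x k ^ p else 0 := by
  split_ifs
  exacts [Real.rpow_nonneg (hx k) p, le_rfl]

theorem evenL2Norm_nonneg (x : ℤ → ℝ) : 0 ≤ evenL2Norm x := Real.sqrt_nonneg _

theorem evenLpNorm_nonneg {x : ℤ → ℝ} (hx : ∀ k, 0 ≤ x k) (p : ℝ) : 0 ≤ evenLpNorm x p :=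
  Real.rpow_nonneg (tsum_nonneg (ite_even_rpow_nonneg hx p)) _

theorem evenL2Norm_eq_evenLpNorm (x : ℤ → ℝ) : evenL2Norm x = evenLpNorm x 2 := by
  simp only [evenL2Norm, evenLpNorm, Real.sqrt_eq_rpow, Real.rpow_two]

theorem ofReal_evenLpNorm {x : ℤ → ℝ} (hx : ∀ k, 0 ≤ x k) {p : ℝ} (hp : 0 < p)
    (hsum : Summable fun k : ℤ => if Even k then x k ^ p else 0) :
    ENNReal.ofReal (evenLpNorm x p) = (∑' k, evenPart x k ^ p) ^ (1 / p) := by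
  have hnn := ite_even_rpow_nonneg hx p
  rw [evenLpNorm, ← ENNReal.ofReal_rpow_of_nonneg (tsum_nonneg hnn) (by positivity),
    ENNReal.ofReal_tsum_of_nonneg hnn hsum]
  congr 1
  refine tsum_congr fun k => ?_
  simp only [evenPart]
  split_ifs
  · exact (ENNReal.ofReal_rpow_of_nonneg (hx k) hp.le).symm
  · rw [ENNReal.ofReal_zero, ENNReal.zero_rpow_of_pos hp]

theorem tsum_le_of_ofReal_le {α : Type*} {f : α → ℝ} (hf : ∀ i, 0 ≤ f i) {F : α → ℝ≥0∞}
    (hfF : ∀ i, ENNReal.ofReal (f i) ≤ F i) {c : ℝ} (hc : 0 ≤ c)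
    (hF : ∑' i, F i ≤ ENNReal.ofReal c) : ∑' i, f i ≤ c := by
  by_cases hs : Summable f
  · rw [← ENNReal.ofReal_le_ofReal_iff hc, ENNReal.ofReal_tsum_of_nonneg hf hs]
    exact (ENNReal.tsum_le_tsum hfF).trans hF
  · rw [tsum_eq_zero_of_not_summable hs]
    exact hc

theorem boundaryGap_le_natAbs_sub {N k j : ℤ} (hN : Even N) (hk : Even k) (hj : Even j)
    (h : |k| ≤ N ∧ N < |j| ∨ N < |k| ∧ |j| ≤ N) : boundaryGap (N + 1) k ≤ (j - k).natAbs := by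
  rw [Int.even_iff] at hN hk hj
  simp only [boundaryGap, Int.abs_eq_natAbs] at h ⊢
  omega

theorem ofReal_div_natAbs_eq {r g : ℤ → ℝ} (hr : ∀ k, 0 ≤ r k) (hg : ∀ k, 0 ≤ g k)
    {D : ℤ → ℕ} {k j : ℤ} (hk : Even k) (hj : Even j) (hD : 0 < D k)
    (hDkj : D k ≤ (j - k).natAbs) :
    ENNReal.ofReal (r (j + k) * g k / ((|j - k| : ℤ) : ℝ)) =
      evenPart r (j + k) * evenPart g k * truncInvKernel D k j := by
  have hjk : (0 : ℝ) < (j - k).natAbs := by exact_mod_cast hD.trans_le hDkj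
  rw [← Nat.cast_natAbs, div_eq_mul_inv, ENNReal.ofReal_mul (mul_nonneg (hr _) (hg _)),
    ENNReal.ofReal_mul (hr _), ENNReal.ofReal_inv_of_pos hjk, ENNReal.ofReal_natCast]
  simp only [evenPart, truncInvKernel, if_pos (hj.add hk), if_pos hk, if_pos hDkj]

theorem tsum_ite_mul_div_abs_sub_le {r g : ℤ → ℝ} (hr : ∀ k, 0 ≤ r k) (hg : ∀ k, 0 ≤ g k)
    {D : ℤ → ℕ} (hD : ∀ k, 0 < D k) (sel : ℤ × ℤ → Prop) [DecidablePred sel]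
    (hsel : ∀ p, sel p → Even p.1 ∧ Even p.2 ∧ D p.1 ≤ (p.2 - p.1).natAbs) {c : ℝ} (hc : 0 ≤ c)
    (hbound : ∑' k, ∑' j, evenPart r (j + k) * evenPart g k * truncInvKernel D k j ≤
      ENNReal.ofReal c) :
    ∑' p : ℤ × ℤ, (if sel p then r (p.2 + p.1) * g p.1 / ((|p.2 - p.1| : ℤ) : ℝ) else 0) ≤ c := by
  refine tsum_le_of_ofReal_le (fun p => ?_) (fun p => ?_) hc (ENNReal.tsum_prod.trans_le hbound)
  · split_ifs
    exacts [div_nonneg (mul_nonneg (hr _) (hg _)) (by positivity), le_rfl]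
  · split_ifs with hp
    · obtain ⟨hk, hj, hDkj⟩ := hsel p hp
      exact (ofReal_div_natAbs_eq hr hg hk hj (hD _) hDkj).le
    · simp

theorem tsum_tsum_evenPart_truncInvKernel_le {p q : ℝ} (hpq : p.HolderConjugate q)
    {r g : ℤ → ℝ} (hr : ∀ k, 0 ≤ r k) (hg : ∀ k, 0 ≤ g k)
    (hrs : Summable fun k : ℤ => if Even k then r k ^ 2 else 0)
    (hgs : Summable fun k : ℤ => if Even k then g k ^ p else 0) (c : ℤ) :
    ∑' k, ∑' j, evenPart r (j + k) * evenPart g k * truncInvKernel (boundaryGap c) k j ≤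
      ENNReal.ofReal (evenL2Norm r) * ENNReal.ofReal (evenLpNorm g p) *
        (4 * ∑' n : ℕ, (4 / ((n : ℝ≥0∞) + 1)) ^ (q / 2)) ^ (1 / q) := by
  have hrs' : Summable fun k : ℤ => if Even k then r k ^ (2 : ℝ) else 0 := by
    simpa only [Real.rpow_two] using hrs
  rw [evenL2Norm_eq_evenLpNorm, ofReal_evenLpNorm hr two_pos hrs',
    ofReal_evenLpNorm hg hpq.pos hgs]
  grw [ENNReal.tsum_tsum_mul_add_le hpq,
    tsum_rpow_tsum_truncInvKernel_sq_le c (half_pos hpq.symm.pos)]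
  exact one_div_nonneg.2 hpq.symm.nonneg

theorem exists_tsum_tsum_evenPart_truncInvKernel_le {p : ℝ} (hp1 : 1 < p) (hp2 : p < 2) :
    ∃ C > 0, ∀ r g : ℤ → ℝ, (∀ k, 0 ≤ r k) → (∀ k, 0 ≤ g k) →
      (Summable fun k : ℤ => if Even k then r k ^ 2 else 0) →
      (Summable fun k : ℤ => if Even k then g k ^ p else 0) → ∀ c : ℤ,
        ∑' k, ∑' j, evenPart r (j + k) * evenPart g k * truncInvKernel (boundaryGap c) k j ≤
          ENNReal.ofReal (C * evenL2Norm r * evenLpNorm g p) := by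
  set q := p.conjExponent
  have hpq : p.HolderConjugate q := .conjExponent hp1
  have hq : 2 < q := by
    change 2 < p / (p - 1)
    rw [lt_div_iff₀ (sub_pos.2 hp1)]
    linarith
  set X := 4 * ∑' n : ℕ, (4 / ((n : ℝ≥0∞) + 1)) ^ (q / 2) with hX
  have hX_top : X ≠ ⊤ := ENNReal.mul_ne_top ENNReal.ofNat_ne_top
    (ENNReal.tsum_div_nat_succ_rpow_ne_top (by linarith))
  have hX_pos : 0 < X :=
    ENNReal.mul_pos four_ne_zero fun h => by simpa using ENNReal.tsum_eq_zero.1 h 0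
  have hXq_top : X ^ (1 / q) ≠ ⊤ :=
    ENNReal.rpow_ne_top_of_nonneg (one_div_nonneg.2 hpq.symm.nonneg) hX_top
  have hC : 0 < (X ^ (1 / q)).toReal :=
    ENNReal.toReal_pos (ENNReal.rpow_pos hX_pos hX_top).ne' hXq_top
  refine ⟨_, hC, fun r g hr hg hrs hgs c => ?_⟩
  rw [ENNReal.ofReal_mul (mul_nonneg hC.le (evenL2Norm_nonneg r)), ENNReal.ofReal_mul hC.le,
    ENNReal.ofReal_toReal hXq_top]
  exact (tsum_tsum_evenPart_truncInvKernel_le hpq hr hg hrs hgs c).trans_eq (by rw [hX]; ring)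

/-- For every `p ∈ (1,2)` there is `C(p) > 0` such that for all
nonnegative sequences `r ∈ ℓ²(2ℤ)`, `g ∈ ℓᵖ(2ℤ)` and every even `N ≥ 0`,
`σ₁(N) ≤ C(p)‖r‖‖g‖_p` and `σ₂(N) ≤ C(p)‖r‖‖g‖_p`. -/
theorem stmt5 (p : ℝ) (hp1 : 1 < p) (hp2 : p < 2) :
    ∃ C > 0, ∀ r g : ℤ → ℝ, (∀ k, 0 ≤ r k) → (∀ k, 0 ≤ g k) →
      (Summable fun k : ℤ => if Even k then r k ^ 2 else 0) →
      (Summable fun k : ℤ => if Even k then g k ^ p else 0) →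
      ∀ N : ℤ, 0 ≤ N → Even N →
        sigma1 r g N ≤ C * evenL2Norm r * evenLpNorm g p ∧
        sigma2 r g N ≤ C * evenL2Norm r * evenLpNorm g p := by
  obtain ⟨C, hC, hbound⟩ := exists_tsum_tsum_evenPart_truncInvKernel_le hp1 hp2
  refine ⟨C, hC, fun r g hr hg hrs hgs N _ hN => ?_⟩
  have hbound := hbound r g hr hg hrs hgs (N + 1)
  have hrhs := mul_nonneg (mul_nonneg hC.le (evenL2Norm_nonneg r)) (evenLpNorm_nonneg hg p)
  constructor
  · exact tsum_ite_mul_div_abs_sub_le hr hg (D := boundaryGap (N + 1)) (fun _ => Nat.succ_pos _) _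
      (fun p hp => ⟨hp.1, hp.2.1, boundaryGap_le_natAbs_sub hN hp.1 hp.2.1 (.inl hp.2.2)⟩)
      hrhs hbound
  · simp only [sigma2, abs_sub_comm _ (Prod.snd _)]
    exact tsum_ite_mul_div_abs_sub_le hr hg (D := boundaryGap (N + 1)) (fun _ => Nat.succ_pos _) _
      (fun p hp => ⟨hp.1, hp.2.1, boundaryGap_le_natAbs_sub hN hp.1 hp.2.1 (.inr hp.2.2)⟩)
      hrhs hbound
end

section
/- For every δ > 1 there is a constant C(δ) > 0 such that: if r, g : 2ℤ → [0,∞) satisfy Σ_{k∈2ℤ} r(k)² < ∞ and |g|_δ² := Σ_{k∈2ℤ} g(k)²·(log(|k|+e))^δ < ∞, then for every even N ∈ 2ℕ one has σ₁(N) ≤ C(δ)·‖r‖·|g|_δ and σ₂(N) ≤ C(δ)·‖r‖·|g|_δ. -/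
/-! Cauchy–Schwarz in `j` bounds the inner sum of `σᵢ(N)` by
`‖r‖ (Σ_{|m| ≥ a} m⁻²)^{1/2} ≤ 2‖r‖ a^{-1/2}`, where `a` is the distance from `k` to the range of `j`
(`N + 1 - |k|` for `σ₁`, `|k| - N` for `σ₂`). Cauchy–Schwarz in `k` against the weight
`log(|k| + e)^δ` leaves `Σ_k 1 / (a(k) log(|k| + e)^δ)`, which is bounded uniformly in `N`: each term
is at most a sum of translates of the Bertrand weight `1 / ((n + 1) log(n + e)^δ)`, whose series
converges for `δ > 1` by Cauchy condensation. -/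

open scoped BigOperators

/-- `|x|_δ = (Σ_{k∈2ℤ} x(k)²(log(|k|+e))^δ)^{1/2}`. -/
noncomputable def evenLogNorm (x : ℤ → ℝ) (δ : ℝ) : ℝ :=
  Real.sqrt (∑' k : ℤ, if Even k then x k ^ 2 * Real.log (|k| + Real.exp 1) ^ δ else 0)

open Finset

noncomputable def logWeight (δ x : ℝ) : ℝ := Real.log (x + Real.exp 1) ^ δ

noncomputable def bertrandWeight (δ x : ℝ) : ℝ := ((x + 1) * logWeight δ x)⁻¹

lemma one_le_log_add_exp_one {x : ℝ} (hx : 0 ≤ x) : 1 ≤ Real.log (x + Real.exp 1) := by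
  calc 1 = Real.log (Real.exp 1) := (Real.log_exp 1).symm
    _ ≤ _ := Real.log_le_log (Real.exp_pos 1) (by linarith)

lemma logWeight_pos (δ : ℝ) {x : ℝ} (hx : 0 ≤ x) : 0 < logWeight δ x :=
  Real.rpow_pos_of_pos (by linarith [one_le_log_add_exp_one hx]) δ

lemma logWeight_le_logWeight {δ x y : ℝ} (hδ : 0 ≤ δ) (hx : 0 ≤ x) (hxy : x ≤ y) :
    logWeight δ x ≤ logWeight δ y :=
  Real.rpow_le_rpow (by linarith [one_le_log_add_exp_one hx])
    (Real.log_le_log (by positivity) (by linarith)) hδ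

lemma bertrandWeight_pos (δ : ℝ) {x : ℝ} (hx : 0 ≤ x) : 0 < bertrandWeight δ x := by
  have := logWeight_pos δ hx
  unfold bertrandWeight
  positivity

lemma bertrandWeight_le_bertrandWeight {δ x y : ℝ} (hδ : 0 ≤ δ) (hx : 0 ≤ x) (hxy : x ≤ y) :
    bertrandWeight δ y ≤ bertrandWeight δ x := by
  have := logWeight_pos δ hx
  exact inv_anti₀ (by positivity) (mul_le_mul (by linarith) (logWeight_le_logWeight hδ hx hxy)
    this.le (by linarith))

lemma two_pow_mul_bertrandWeight_le {δ : ℝ} (hδ : 0 ≤ δ) (k : ℕ) :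
    2 ^ k * bertrandWeight δ (2 ^ k) ≤ ((Real.log 2 / 2) ^ δ)⁻¹ * (((k + 1 : ℕ) : ℝ) ^ δ)⁻¹ := by
  have hpow : (0 : ℝ) < 2 ^ k := by positivity
  have hL := logWeight_pos δ hpow.le
  have hlog : ((k + 1 : ℕ) : ℝ) * (Real.log 2 / 2) ≤ Real.log (2 ^ k + Real.exp 1) := by
    have he : (2 : ℝ) < Real.exp 1 := by linarith [Real.exp_one_gt_d9]
    have hsq : (2 : ℝ) ^ (k + 1) ≤ (2 ^ k + Real.exp 1) ^ 2 := by rw [pow_succ]; nlinarith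
    have := Real.log_le_log (by positivity) hsq
    rw [Real.log_pow, Real.log_pow] at this
    push_cast at this ⊢
    linarith
  calc 2 ^ k * bertrandWeight δ (2 ^ k) ≤ (logWeight δ (2 ^ k))⁻¹ := by
        rw [bertrandWeight, mul_inv, ← mul_assoc]
        refine mul_le_of_le_one_left (by positivity) ?_
        rw [← div_eq_mul_inv, div_le_one (by positivity)]
        linarith
    _ ≤ (((k + 1 : ℕ) * (Real.log 2 / 2) : ℝ) ^ δ)⁻¹ :=
        inv_anti₀ (by positivity) (Real.rpow_le_rpow (by positivity) hlog hδ)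
    _ = ((Real.log 2 / 2) ^ δ)⁻¹ * (((k + 1 : ℕ) : ℝ) ^ δ)⁻¹ := by
        rw [Real.mul_rpow (by positivity) (by positivity), mul_inv, mul_comm]

lemma summable_bertrandWeight {δ : ℝ} (hδ : 1 < δ) :
    Summable fun n : ℕ => bertrandWeight δ n := by
  have hδ0 : 0 ≤ δ := by linarith
  refine (summable_condensed_iff_of_nonneg (fun n => (bertrandWeight_pos δ n.cast_nonneg).le)
    fun m n _ hmn => bertrandWeight_le_bertrandWeight hδ0 m.cast_nonneg
      (by exact_mod_cast hmn)).1 ?_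
  have hp : Summable fun k : ℕ => (((k + 1 : ℕ) : ℝ) ^ δ)⁻¹ :=
    (summable_nat_add_iff 1).2 (Real.summable_nat_rpow_inv.2 hδ)
  refine Summable.of_nonneg_of_le (fun k => ?_) (fun k => ?_) (hp.mul_left ((Real.log 2 / 2) ^ δ)⁻¹)
  · have := bertrandWeight_pos δ (by positivity : (0 : ℝ) ≤ 2 ^ k)
    push_cast at this ⊢
    positivity
  · exact_mod_cast two_pow_mul_bertrandWeight_le hδ0 k

lemma summable_bertrandWeight_abs {δ : ℝ} (hδ : 1 < δ) :
    Summable fun m : ℤ => bertrandWeight δ (|m| : ℤ) := by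
  refine .of_nat_of_neg ?_ ?_ <;> simpa using summable_bertrandWeight hδ

lemma inv_mul_logWeight_le_of_le {δ u v : ℝ} (hδ : 0 ≤ δ) (hv : 0 ≤ v) (hvu : v ≤ u) :
    ((v + 1) * logWeight δ u)⁻¹ ≤ bertrandWeight δ v :=
  inv_anti₀ (mul_pos (by linarith) (logWeight_pos δ hv))
    (mul_le_mul_of_nonneg_left (logWeight_le_logWeight hδ hv hvu) (by linarith))

lemma inv_mul_logWeight_le_add {δ u v : ℝ} (hδ : 0 ≤ δ) (hu : 0 ≤ u) (hv : 0 ≤ v) :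
    ((v + 1) * logWeight δ u)⁻¹ ≤ bertrandWeight δ v + bertrandWeight δ u := by
  rcases le_total v u with hvu | huv
  · linarith [inv_mul_logWeight_le_of_le hδ hv hvu, bertrandWeight_pos δ hu]
  · have : ((v + 1) * logWeight δ u)⁻¹ ≤ bertrandWeight δ u :=
      inv_anti₀ (mul_pos (by linarith) (logWeight_pos δ hu))
        (mul_le_mul_of_nonneg_right (by linarith) (logWeight_pos δ hu).le)
    linarith [bertrandWeight_pos δ hv]

lemma sum_comp_le_tsum {ι κ : Type*} {f : κ → ℝ} (hf0 : ∀ m, 0 ≤ f m) (hf : Summable f)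
    {e : ι → κ} (he : Function.Injective e) (s : Finset ι) : ∑ k ∈ s, f (e k) ≤ ∑' m, f m :=
  ((hf.comp_injective he).sum_le_tsum s fun m _ => hf0 (e m)).trans
    (tsum_comp_le_tsum_of_inj hf hf0 he)

lemma sum_inv_mul_logWeight_le_of_abs_le {δ : ℝ} (hδ : 1 < δ) (N : ℤ) {s : Finset ℤ}
    (hs : ∀ k ∈ s, |k| ≤ N) :
    ∑ k ∈ s, (((N + 1 - |k| : ℤ) : ℝ) * logWeight δ (|k| : ℤ))⁻¹
      ≤ 3 * ∑' m : ℤ, bertrandWeight δ (|m| : ℤ) := by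
  have hF0 (m : ℤ) : 0 ≤ bertrandWeight δ (|m| : ℤ) := (bertrandWeight_pos δ (by positivity)).le
  have hF := summable_bertrandWeight_abs hδ
  have hpt : ∀ k ∈ s, (((N + 1 - |k| : ℤ) : ℝ) * logWeight δ (|k| : ℤ))⁻¹
      ≤ bertrandWeight δ (|N - k| : ℤ) + bertrandWeight δ (|N + k| : ℤ)
        + bertrandWeight δ (|k| : ℤ) := by
    intro k hk
    have hkN := hs k hk
    have hNk : bertrandWeight δ ((N - |k| : ℤ) : ℝ)
        ≤ bertrandWeight δ (|N - k| : ℤ) + bertrandWeight δ (|N + k| : ℤ) := by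
      rcases abs_cases k with ⟨h, -⟩ | ⟨h, -⟩
      · rw [show N - |k| = |N - k| by rw [abs_of_nonneg (show 0 ≤ N - k by omega)]; omega]
        linarith [hF0 (N + k)]
      · rw [show N - |k| = |N + k| by rw [abs_of_nonneg (show 0 ≤ N + k by omega)]; omega]
        linarith [hF0 (N - k)]
    rw [show ((N + 1 - |k| : ℤ) : ℝ) = ((N - |k| : ℤ) : ℝ) + 1 by push_cast; ring]
    refine (inv_mul_logWeight_le_add (by linarith) (by positivity)
      (by exact_mod_cast (show (0 : ℤ) ≤ N - |k| by omega))).trans ?_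
    linarith
  refine (sum_le_sum hpt).trans ?_
  rw [sum_add_distrib, sum_add_distrib]
  linarith [sum_comp_le_tsum hF0 hF (sub_right_injective (b := N)) s,
    sum_comp_le_tsum hF0 hF (add_right_injective N) s, hF.sum_le_tsum s fun m _ => hF0 m]

lemma sum_inv_mul_logWeight_le_of_lt_abs {δ : ℝ} (hδ : 1 < δ) {N : ℤ} (hN : 0 ≤ N)
    {s : Finset ℤ} (hs : ∀ k ∈ s, N < |k|) :
    ∑ k ∈ s, (((|k| - N : ℤ) : ℝ) * logWeight δ (|k| : ℤ))⁻¹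
      ≤ 2 * ∑' m : ℤ, bertrandWeight δ (|m| : ℤ) := by
  have hF0 (m : ℤ) : 0 ≤ bertrandWeight δ (|m| : ℤ) := (bertrandWeight_pos δ (by positivity)).le
  have hF := summable_bertrandWeight_abs hδ
  have hpt : ∀ k ∈ s, (((|k| - N : ℤ) : ℝ) * logWeight δ (|k| : ℤ))⁻¹
      ≤ bertrandWeight δ (|k - (N + 1)| : ℤ) + bertrandWeight δ (|k + (N + 1)| : ℤ) := by
    intro k hk
    have hkN := hs k hk
    have hv : bertrandWeight δ ((|k| - N - 1 : ℤ) : ℝ)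
        ≤ bertrandWeight δ (|k - (N + 1)| : ℤ) + bertrandWeight δ (|k + (N + 1)| : ℤ) := by
      rcases abs_cases k with ⟨h, -⟩ | ⟨h, -⟩
      · rw [show |k| - N - 1 = |k - (N + 1)| by
          rw [abs_of_nonneg (show 0 ≤ k - (N + 1) by omega)]; omega]
        linarith [hF0 (k + (N + 1))]
      · rw [show |k| - N - 1 = |k + (N + 1)| by
          rw [abs_of_nonpos (show k + (N + 1) ≤ 0 by omega)]; omega]
        linarith [hF0 (k - (N + 1))]
    rw [show ((|k| - N : ℤ) : ℝ) = ((|k| - N - 1 : ℤ) : ℝ) + 1 by push_cast; ring]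
    exact (inv_mul_logWeight_le_of_le (by linarith)
      (by exact_mod_cast (show (0 : ℤ) ≤ |k| - N - 1 by omega))
      (by exact_mod_cast (show |k| - N - 1 ≤ |k| by omega))).trans hv
  refine (sum_le_sum hpt).trans ?_
  rw [sum_add_distrib]
  linarith [sum_comp_le_tsum hF0 hF (sub_left_injective (b := N + 1)) s,
    sum_comp_le_tsum hF0 hF (add_left_injective (N + 1)) s]

lemma sum_le_tsum_ite {ι : Type*} {p : ι → Prop} [DecidablePred p] {h : ι → ℝ}
    (h0 : ∀ i, 0 ≤ h i) (hs : Summable fun i => if p i then h i else 0) {T : Finset ι}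
    (hT : ∀ i ∈ T, p i) : ∑ i ∈ T, h i ≤ ∑' i, if p i then h i else 0 :=
  calc ∑ i ∈ T, h i = ∑ i ∈ T, if p i then h i else 0 :=
        sum_congr rfl fun i hi => (if_pos (hT i hi)).symm
    _ ≤ _ := hs.sum_le_tsum T fun i _ => by split_ifs <;> simp [h0]

lemma sqrt_sum_sq_le_evenL2Norm {r : ℤ → ℝ}
    (hr : Summable fun k : ℤ => if Even k then r k ^ 2 else 0) {T : Finset ℤ}
    (hT : ∀ k ∈ T, Even k) : √(∑ k ∈ T, r k ^ 2) ≤ evenL2Norm r :=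
  Real.sqrt_le_sqrt (sum_le_tsum_ite (fun k => sq_nonneg (r k)) hr hT)

lemma sqrt_sum_sq_mul_logWeight_le_evenLogNorm {g : ℤ → ℝ} {δ : ℝ}
    (hg : Summable fun k : ℤ => if Even k then g k ^ 2 * logWeight δ (|k| : ℤ) else 0)
    {T : Finset ℤ} (hT : ∀ k ∈ T, Even k) :
    √(∑ k ∈ T, g k ^ 2 * logWeight δ (|k| : ℤ)) ≤ evenLogNorm g δ :=
  Real.sqrt_le_sqrt (sum_le_tsum_ite
    (fun k => mul_nonneg (sq_nonneg _) (logWeight_pos δ (by positivity)).le) hg hT)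

lemma sum_inv_sq_le_of_le {a : ℕ} (ha : 1 ≤ a) {S : Finset ℕ} (hS : ∀ n ∈ S, a ≤ n) :
    ∑ n ∈ S, ((n : ℝ) ^ 2)⁻¹ ≤ 2 / a := by
  have hsub : S ⊆ Ioo (a - 1) (S.sup id + 1) := fun n hn =>
    mem_Ioo.2 ⟨by have := hS n hn; omega, Nat.lt_succ_of_le (le_sup (f := id) hn)⟩
  calc ∑ n ∈ S, ((n : ℝ) ^ 2)⁻¹ ≤ ∑ n ∈ Ioo (a - 1) (S.sup id + 1), ((n : ℝ) ^ 2)⁻¹ :=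
        sum_le_sum_of_subset_of_nonneg hsub fun _ _ _ => by positivity
    _ ≤ 2 / ((a - 1 : ℕ) + 1 : ℝ) := sum_Ioo_inv_sq_le _ _
    _ = 2 / a := by rw [← Nat.cast_add_one, Nat.sub_add_cancel ha]

lemma sum_inv_sq_le_of_le_abs {a : ℤ} (ha : 1 ≤ a) {D : Finset ℤ} (hD : ∀ m ∈ D, a ≤ |m|) :
    ∑ m ∈ D, ((m : ℝ) ^ 2)⁻¹ ≤ 4 / a := by
  have half : ∀ E ⊆ D, Set.InjOn Int.natAbs E → ∑ m ∈ E, ((m : ℝ) ^ 2)⁻¹ ≤ 2 / a := by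
    intro E hE hinj
    have hcast : ∀ m : ℤ, ((m : ℝ) ^ 2)⁻¹ = (((m.natAbs : ℕ) : ℝ) ^ 2)⁻¹ := fun m => by
      rw [Nat.cast_natAbs, Int.cast_abs, sq_abs]
    rw [sum_congr rfl fun m _ => hcast m, ← sum_image (f := fun n : ℕ => ((n : ℝ) ^ 2)⁻¹) hinj]
    have := sum_inv_sq_le_of_le (a := a.toNat) (S := E.image Int.natAbs) (by omega) (by
      simp only [mem_image]
      rintro _ ⟨m, hm, rfl⟩
      have := hD m (hE hm)
      rw [Int.abs_eq_natAbs] at this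
      omega)
    rwa [show ((a.toNat : ℕ) : ℝ) = a by exact_mod_cast Int.toNat_of_nonneg (by omega)] at this
  rw [← sum_filter_add_sum_filter_not D (0 ≤ ·)]
  have h1 := half (D.filter (0 ≤ ·)) (filter_subset _ D) fun m hm m' hm' h => by
    simp only [mem_coe, mem_filter] at hm hm'
    omega
  have h2 := half (D.filter (¬0 ≤ ·)) (filter_subset _ D) fun m hm m' hm' h => by
    simp only [mem_coe, mem_filter] at hm hm'
    omega
  linarith [show (4 : ℝ) / a = 2 / a + 2 / a by ring]

lemma sum_div_abs_sub_le {r : ℤ → ℝ} (hr : Summable fun k : ℤ => if Even k then r k ^ 2 else 0)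
    {k a : ℤ} (hk : Even k) (ha : 1 ≤ a) {Q : Finset ℤ} (hQ : ∀ j ∈ Q, Even j ∧ a ≤ |j - k|) :
    ∑ j ∈ Q, r (j + k) / (|j - k| : ℤ) ≤ evenL2Norm r * √(4 / a) := by
  have hr' : √(∑ j ∈ Q, r (j + k) ^ 2) ≤ evenL2Norm r := by
    rw [← sum_image (f := fun m => r m ^ 2) fun _ _ _ _ h => add_right_cancel h]
    refine sqrt_sum_sq_le_evenL2Norm hr ?_
    simp only [mem_image]
    rintro _ ⟨j, hj, rfl⟩
    exact (hQ j hj).1.add hk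
  have hw : √(∑ j ∈ Q, (((|j - k| : ℤ) : ℝ)⁻¹) ^ 2) ≤ √(4 / a) := by
    refine Real.sqrt_le_sqrt ?_
    have := sum_inv_sq_le_of_le_abs ha (D := Q.image (· - k)) (by
      simp only [mem_image]
      rintro _ ⟨j, hj, rfl⟩
      exact (hQ j hj).2)
    rw [sum_image fun _ _ _ _ h => sub_left_injective h] at this
    convert this using 2 with j
    push_cast
    rw [inv_pow, sq_abs]
  calc ∑ j ∈ Q, r (j + k) / (|j - k| : ℤ)
      = ∑ j ∈ Q, r (j + k) * ((|j - k| : ℤ) : ℝ)⁻¹ := by simp only [div_eq_mul_inv]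
    _ ≤ √(∑ j ∈ Q, r (j + k) ^ 2) * √(∑ j ∈ Q, (((|j - k| : ℤ) : ℝ)⁻¹) ^ 2) :=
      Real.sum_mul_le_sqrt_mul_sqrt _ _ _
    _ ≤ evenL2Norm r * √(4 / a) := mul_le_mul hr' hw (Real.sqrt_nonneg _) (Real.sqrt_nonneg _)

lemma sum_mul_sqrt_le {ι : Type*} (s : Finset ι) (f c w : ι → ℝ) (hc : ∀ i ∈ s, 0 ≤ c i)
    (hw : ∀ i ∈ s, 0 < w i) :
    ∑ i ∈ s, f i * √(c i) ≤ √(∑ i ∈ s, f i ^ 2 * w i) * √(∑ i ∈ s, c i / w i) := by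
  have key : ∀ i ∈ s, f i * √(c i) = (f i * √(w i)) * √(c i / w i) := fun i hi => by
    rw [mul_assoc, ← Real.sqrt_mul (hw i hi).le, mul_div_cancel₀ _ (hw i hi).ne']
  rw [sum_congr rfl key]
  refine (Real.sum_mul_le_sqrt_mul_sqrt _ _ _).trans_eq ?_
  congr 2 <;> refine sum_congr rfl fun i hi => ?_
  · rw [mul_pow, Real.sq_sqrt (hw i hi).le]
  · exact Real.sq_sqrt (div_nonneg (hc i hi) (hw i hi).le)

noncomputable def evenInvDistSum (r g : ℤ → ℝ) (A B : ℤ → Prop) [DecidablePred A]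
    [DecidablePred B] : ℝ :=
  ∑' q : ℤ × ℤ, if Even q.1 ∧ Even q.2 ∧ A q.1 ∧ B q.2
    then r (q.2 + q.1) * g q.1 / (|q.2 - q.1| : ℤ) else 0

lemma sigma1_eq (r g : ℤ → ℝ) (N : ℤ) :
    sigma1 r g N = evenInvDistSum r g (|·| ≤ N) (N < |·|) := rfl

lemma sigma2_eq (r g : ℤ → ℝ) (N : ℤ) :
    sigma2 r g N = evenInvDistSum r g (N < |·|) (|·| ≤ N) :=
  tsum_congr fun q => by rw [abs_sub_comm]

lemma sum_ite_div_abs_sub_le {r g : ℤ → ℝ} (hg0 : ∀ k, 0 ≤ g k)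
    (hr : Summable fun k : ℤ => if Even k then r k ^ 2 else 0) {A B : ℤ → Prop} [DecidablePred A]
    [DecidablePred B] {a : ℤ → ℤ} (ha : ∀ k, A k → 1 ≤ a k)
    (hab : ∀ k j, A k → B j → a k ≤ |j - k|) (k : ℤ) (Q : Finset ℤ) :
    ∑ j ∈ Q, (if Even k ∧ Even j ∧ A k ∧ B j then r (j + k) * g k / (|j - k| : ℤ) else 0)
      ≤ if Even k ∧ A k then g k * (evenL2Norm r * √(4 / a k)) else 0 := by
  split_ifs with hk
  · calc _ = g k * ∑ j ∈ Q with Even j ∧ B j, r (j + k) / (|j - k| : ℤ) := by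
          rw [sum_filter, mul_sum]
          refine sum_congr rfl fun j _ => ?_
          simp only [hk.1, hk.2, true_and]
          split_ifs <;> ring
      _ ≤ _ := mul_le_mul_of_nonneg_left (sum_div_abs_sub_le hr hk.1 (ha k hk.2) fun j hj =>
          have hj := (mem_filter.1 hj).2
          ⟨hj.1, hab k j hk.2 hj.2⟩) (hg0 k)
  · exact (sum_eq_zero fun j _ => if_neg fun h => hk ⟨h.1, h.2.2.1⟩).le

lemma sum_mul_sqrt_four_div_le {g : ℤ → ℝ} {δ : ℝ}
    (hg : Summable fun k : ℤ => if Even k then g k ^ 2 * logWeight δ (|k| : ℤ) else 0)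
    (a : ℤ → ℤ) {P : Finset ℤ} (hP : ∀ k ∈ P, Even k ∧ 1 ≤ a k) :
    ∑ k ∈ P, g k * √(4 / a k)
      ≤ evenLogNorm g δ * √(4 * ∑ k ∈ P, ((a k : ℝ) * logWeight δ (|k| : ℤ))⁻¹) := by
  have ha : ∀ k ∈ P, (0 : ℝ) < a k := fun k hk => by exact_mod_cast (hP k hk).2
  refine (sum_mul_sqrt_le P g _ (fun k => logWeight δ (|k| : ℤ))
    (fun k hk => div_nonneg zero_le_four (ha k hk).le)
    fun k _ => logWeight_pos δ (by positivity)).trans (mul_le_mul ?_ (le_of_eq ?_)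
      (Real.sqrt_nonneg _) (Real.sqrt_nonneg _))
  · exact sqrt_sum_sq_mul_logWeight_le_evenLogNorm hg fun k hk => (hP k hk).1
  · rw [mul_sum]
    exact congrArg _ (sum_congr rfl fun k _ => by rw [div_div, div_eq_mul_inv])

theorem evenInvDistSum_le {δ : ℝ} {r g : ℤ → ℝ} (hr0 : ∀ k, 0 ≤ r k) (hg0 : ∀ k, 0 ≤ g k)
    (hr : Summable fun k : ℤ => if Even k then r k ^ 2 else 0)
    (hg : Summable fun k : ℤ => if Even k then g k ^ 2 * logWeight δ (|k| : ℤ) else 0)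
    (A B : ℤ → Prop) [DecidablePred A] [DecidablePred B] (a : ℤ → ℤ)
    (ha : ∀ k, A k → 1 ≤ a k) (hab : ∀ k j, A k → B j → a k ≤ |j - k|) {C : ℝ}
    (hC : ∀ s : Finset ℤ, (∀ k ∈ s, A k) →
      ∑ k ∈ s, ((a k : ℝ) * logWeight δ (|k| : ℤ))⁻¹ ≤ C) :
    evenInvDistSum r g A B ≤ √(4 * C) * evenL2Norm r * evenLogNorm g δ := by
  set F : ℤ × ℤ → ℝ := fun q => if Even q.1 ∧ Even q.2 ∧ A q.1 ∧ B q.2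
    then r (q.2 + q.1) * g q.1 / (|q.2 - q.1| : ℤ) else 0
  have hF0 : 0 ≤ F := fun q => by
    dsimp only [F]
    split_ifs
    exacts [div_nonneg (mul_nonneg (hr0 _) (hg0 _)) (by positivity), le_rfl]
  refine Real.tsum_le_of_sum_le hF0 fun s => ?_
  set P := (s.image Prod.fst).filter fun k => Even k ∧ A k
  have hP : ∀ k ∈ P, Even k ∧ A k := fun k hk => (mem_filter.1 hk).2
  calc ∑ q ∈ s, F q ≤ ∑ q ∈ s.image Prod.fst ×ˢ s.image Prod.snd, F q :=
        sum_le_sum_of_subset_of_nonneg subset_product fun q _ _ => hF0 q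
    _ = ∑ k ∈ s.image Prod.fst, ∑ j ∈ s.image Prod.snd, F (k, j) := sum_product _ _ _
    _ ≤ ∑ k ∈ s.image Prod.fst,
          if Even k ∧ A k then g k * (evenL2Norm r * √(4 / a k)) else 0 :=
        sum_le_sum fun k _ => sum_ite_div_abs_sub_le hg0 hr ha hab k _
    _ = evenL2Norm r * ∑ k ∈ P, g k * √(4 / a k) := by
        rw [← sum_filter, mul_sum]
        exact sum_congr rfl fun k _ => by ring
    _ ≤ evenL2Norm r * (evenLogNorm g δ * √(4 * C)) := by
        refine mul_le_mul_of_nonneg_left ((sum_mul_sqrt_four_div_le hg a fun k hk =>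
          ⟨(hP k hk).1, ha k (hP k hk).2⟩).trans ?_) (Real.sqrt_nonneg _)
        exact mul_le_mul_of_nonneg_left (Real.sqrt_le_sqrt (by linarith [hC P fun k hk =>
          (hP k hk).2])) (Real.sqrt_nonneg _)
    _ = √(4 * C) * evenL2Norm r * evenLogNorm g δ := by ring

/-- For every `δ > 1` there is `C(δ) > 0` such that for all nonnegative
sequences `r ∈ ℓ²(2ℤ)` and `g` with `|g|_δ < ∞`, and every even `N ≥ 0`,
`σ₁(N) ≤ C(δ)‖r‖|g|_δ` and `σ₂(N) ≤ C(δ)‖r‖|g|_δ`. -/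
theorem stmt7 (δ : ℝ) (hδ : 1 < δ) :
    ∃ C > 0, ∀ r g : ℤ → ℝ, (∀ k, 0 ≤ r k) → (∀ k, 0 ≤ g k) →
      (Summable fun k : ℤ => if Even k then r k ^ 2 else 0) →
      (Summable fun k : ℤ => if Even k then g k ^ 2 * Real.log (|k| + Real.exp 1) ^ δ else 0) →
      ∀ N : ℤ, 0 ≤ N → Even N →
        sigma1 r g N ≤ C * evenL2Norm r * evenLogNorm g δ ∧
        sigma2 r g N ≤ C * evenL2Norm r * evenLogNorm g δ := by
  set T := ∑' m : ℤ, bertrandWeight δ (|m| : ℤ)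
  have hT : 0 < T := (summable_bertrandWeight_abs hδ).tsum_pos
    (fun m => (bertrandWeight_pos δ (by positivity)).le) 0 (bertrandWeight_pos δ (by simp))
  refine ⟨√(4 * (3 * T)), Real.sqrt_pos.2 (by positivity),
    fun r g hr0 hg0 hr hg N hN0 _ => ⟨?_, ?_⟩⟩
  · rw [sigma1_eq]
    exact evenInvDistSum_le hr0 hg0 hr hg (|·| ≤ N) (N < |·|) (fun k => N + 1 - |k|)
      (fun k hk => by omega) (fun k j _ hj => by linarith [abs_sub_abs_le_abs_sub j k])
      fun s hs => sum_inv_mul_logWeight_le_of_abs_le hδ N hs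
  · rw [sigma2_eq]
    exact evenInvDistSum_le hr0 hg0 hr hg (N < |·|) (|·| ≤ N) (fun k => |k| - N)
      (fun k hk => by omega)
      (fun k j _ hj => by linarith [abs_sub_abs_le_abs_sub k j, abs_sub_comm k j])
      fun s hs => (sum_inv_mul_logWeight_le_of_lt_abs hδ hN0 hs).trans (by linarith)
end

section
/- Let r : 2ℤ → [0,∞) satisfy Σ_{k∈2ℤ} r(k)² < ∞ and let m ∈ 2ℤ with m ≠ 0. Then Σ_{k∈2ℤ, k≠m} r(m+k)/|m−k| ≤ ‖r‖/√|m| + 2·𝓔_{|m|}(r). -/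
/-- `𝓔_m(x) = (Σ_{j∈2ℤ, |j|≥m} x(j)²)^{1/2}`. -/
noncomputable def evenTail (x : ℤ → ℝ) (m : ℤ) : ℝ :=
  Real.sqrt (∑' j : ℤ, if Even j ∧ m ≤ |j| then x j ^ 2 else 0)

/-!
Writing `m = 2n`, `k = 2i` and `x i = r (2i)`, the sum becomes `½ Σ_i x(n+i)/|n-i|`, i.e.
`½ Σ_j x(j)/|2n-j|` after the shift `j = n + i`. Split it at `|j| < |n|`. The near range has
`2|n| - 1` points, at each of which `|2n - j| > |n|`, so Cauchy–Schwarz bounds that part by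
`‖x‖ √(2/|n|)`, which is `2‖r‖/√|m|`. On the far range Cauchy–Schwarz against
`Σ_{t ≠ 0} t⁻² = π²/3 < 4` gives at most `2 𝓔_{|n|}(x) = 2 𝓔_{|m|}(r)`.
-/

open Real

section CauchySchwarz

variable {ι : Type*} {f g : ι → ℝ}

theorem summable_and_tsum_mul_le_sqrt_mul_sqrt (hf : ∀ i, 0 ≤ f i) (hg : ∀ i, 0 ≤ g i)
    (hf2 : Summable fun i => f i ^ 2) (hg2 : Summable fun i => g i ^ 2) :
    (Summable fun i => f i * g i) ∧ ∑' i, f i * g i ≤ √(∑' i, f i ^ 2) * √(∑' i, g i ^ 2) := by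
  simp only [← rpow_natCast, sqrt_eq_rpow] at hf2 hg2 ⊢
  exact_mod_cast summable_and_inner_le_Lp_mul_Lq_tsum_of_nonneg .two_two hf hg hf2 hg2

theorem tsum_mul_le_sqrt_mul_sqrt_add_compl (s : Set ι) (hf : ∀ i, 0 ≤ f i) (hg : ∀ i, 0 ≤ g i)
    (hf2 : Summable fun i => f i ^ 2) (hg2 : Summable fun i => g i ^ 2) :
    ∑' i, f i * g i ≤
      √(∑' i, s.indicator (f · ^ 2) i) * √(∑' i, s.indicator (g · ^ 2) i) +
        √(∑' i, sᶜ.indicator (f · ^ 2) i) * √(∑' i, sᶜ.indicator (g · ^ 2) i) := by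
  have hsq (t : Set ι) (h : ι → ℝ) (i : ι) : t.indicator h i ^ 2 = t.indicator (h · ^ 2) i := by
    by_cases hi : i ∈ t <;> simp [hi]
  have CS (t : Set ι) := summable_and_tsum_mul_le_sqrt_mul_sqrt
    (Set.indicator_nonneg (fun i _ => hf i)) (Set.indicator_nonneg (fun i _ => hg i))
    (by simpa only [hsq] using hf2.indicator t) (by simpa only [hsq] using hg2.indicator t)
  simp only [hsq] at CS
  have hsplit (i : ι) :
      f i * g i = s.indicator f i * s.indicator g i + sᶜ.indicator f i * sᶜ.indicator g i := by
    by_cases hi : i ∈ s <;> simp [hi]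
  rw [tsum_congr hsplit, (CS s).1.tsum_add (CS sᶜ).1]
  exact add_le_add (CS s).2 (CS sᶜ).2

end CauchySchwarz

theorem tsum_inv_sq_int : ∑' n : ℤ, ((n : ℝ) ^ 2)⁻¹ = π ^ 2 / 3 := by
  -- the term `n = 0` is `0⁻¹ = 0`
  have hzeta : HasSum (fun n : ℕ => ((n : ℝ) ^ 2)⁻¹) (π ^ 2 / 6) := by
    simpa only [one_div] using hasSum_zeta_two
  have hsum : Summable fun n : ℤ => ((n : ℝ) ^ 2)⁻¹ := by
    simpa only [one_div] using summable_one_div_int_pow.mpr one_lt_two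
  have hpnat := tsum_zero_pnat_eq_tsum_nat hzeta.summable
  rw [hzeta.tsum_eq] at hpnat
  rw [tsum_int_eq_zero_add_two_mul_tsum_pnat (fun n => by simp) hsum]
  simp only [Int.cast_natCast, Int.cast_zero, Nat.cast_zero, nsmul_eq_mul] at hpnat ⊢
  linarith

theorem summable_inv_sq_sub (c : ℤ) : Summable fun j : ℤ => (((c - j : ℤ) : ℝ) ^ 2)⁻¹ :=
  (Equiv.subLeft c).summable_iff (f := fun t : ℤ => ((t : ℝ) ^ 2)⁻¹) |>.mpr <| by
    simpa only [one_div] using summable_one_div_int_pow.mpr one_lt_two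

theorem tsum_inv_sq_sub_le_four (c : ℤ) : ∑' j : ℤ, (((c - j : ℤ) : ℝ) ^ 2)⁻¹ ≤ 4 := by
  have := (Equiv.subLeft c).tsum_eq (fun t : ℤ => ((t : ℝ) ^ 2)⁻¹)
  simp only [Equiv.subLeft_apply] at this
  rw [this, tsum_inv_sq_int]
  nlinarith [pi_lt_d2, pi_pos]

theorem tsum_indicator_abs_lt_inv_sq_sub_le {n : ℤ} (hn : n ≠ 0) :
    ∑' j, {j : ℤ | |j| < |n|}.indicator (fun j => (((2 * n - j : ℤ) : ℝ) ^ 2)⁻¹) j ≤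
      2 / |(n : ℝ)| := by
  set A := {j : ℤ | |j| < |n|}
  have hn1 : 1 ≤ |n| := Int.one_le_abs hn
  have hN : (1 : ℝ) ≤ |(n : ℝ)| := by exact_mod_cast hn1
  have hdist (j : ℤ) (hj : j ∈ A) : (|(n : ℝ)| + 1) ^ 2 ≤ ((2 * n - j : ℤ) : ℝ) ^ 2 := by
    have h := abs_sub_abs_le_abs_sub (2 * n) j
    rw [abs_mul, abs_two] at h
    have : |n| + 1 ≤ |2 * n - j| := by linarith [show |j| < |n| from hj]
    rw [← sq_abs ((2 * n - j : ℤ) : ℝ)]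
    gcongr
    exact_mod_cast this
  have hcard : ((Finset.Ioo (-|n|) |n|).card : ℝ) = 2 * |(n : ℝ)| - 1 := by
    have : ((Finset.Ioo (-|n|) |n|).card : ℤ) = 2 * |n| - 1 := by
      rw [Int.card_Ioo, Int.toNat_of_nonneg (by linarith)]
      ring
    exact_mod_cast this
  have hsupp (j : ℤ) (hj : j ∉ Finset.Ioo (-|n|) |n|) :
      A.indicator (fun j => (((2 * n - j : ℤ) : ℝ) ^ 2)⁻¹) j = 0 := by
    rw [Finset.mem_Ioo, ← abs_lt] at hj
    simp [A, hj]
  rw [tsum_eq_sum hsupp]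
  calc ∑ j ∈ Finset.Ioo (-|n|) |n|, A.indicator (fun j => (((2 * n - j : ℤ) : ℝ) ^ 2)⁻¹) j
      ≤ ∑ j ∈ Finset.Ioo (-|n|) |n|, ((|(n : ℝ)| + 1) ^ 2)⁻¹ := by
        refine Finset.sum_le_sum fun j hj => ?_
        have hj' : j ∈ A := abs_lt.mpr (Finset.mem_Ioo.mp hj)
        rw [Set.indicator_of_mem hj']
        exact inv_anti₀ (by positivity) (hdist j hj')
    _ = (2 * |(n : ℝ)| - 1) / (|(n : ℝ)| + 1) ^ 2 := by
        rw [Finset.sum_const, nsmul_eq_mul, hcard, div_eq_mul_inv]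
    _ ≤ 2 / |(n : ℝ)| := by
        rw [div_le_div_iff₀ (by positivity) (by positivity)]
        nlinarith

theorem tsum_div_abs_sub_le {x : ℤ → ℝ} (hx : ∀ j, 0 ≤ x j) (hx2 : Summable fun j => x j ^ 2)
    {n : ℤ} (hn : n ≠ 0) :
    ∑' i, x (n + i) / (|n - i| : ℤ) ≤
      √(2 / |(n : ℝ)|) * √(∑' j, x j ^ 2) +
        2 * √(∑' j, if |n| ≤ |j| then x j ^ 2 else 0) := by
  set g : ℤ → ℝ := fun j => |((2 * n - j : ℤ) : ℝ)|⁻¹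
  set A := {j : ℤ | |j| < |n|}
  have hg_sq : (g · ^ 2) = fun j => (((2 * n - j : ℤ) : ℝ) ^ 2)⁻¹ := by
    funext j; simp only [g, inv_pow, sq_abs]
  have hg2 : Summable fun j => g j ^ 2 := hg_sq ▸ summable_inv_sq_sub (2 * n)
  have hreindex : ∑' i, x (n + i) / (|n - i| : ℤ) = ∑' j, x j * g j := by
    rw [← (Equiv.addLeft n).tsum_eq (fun j => x j * g j)]
    refine tsum_congr fun i => ?_
    simp only [Equiv.coe_addLeft, g, show 2 * n - (n + i) = n - i by ring, Int.cast_abs,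
      div_eq_mul_inv]
  have hx_near : ∑' j, A.indicator (x · ^ 2) j ≤ ∑' j, x j ^ 2 :=
    (hx2.indicator A).tsum_le_tsum (Set.indicator_le_self' fun j _ => sq_nonneg _) hx2
  have hx_far : ∑' j, Aᶜ.indicator (x · ^ 2) j = ∑' j, if |n| ≤ |j| then x j ^ 2 else 0 :=
    tsum_congr fun j => by simp [Set.indicator_apply, A]
  have hg_near : ∑' j, A.indicator (g · ^ 2) j ≤ 2 / |(n : ℝ)| :=
    hg_sq ▸ tsum_indicator_abs_lt_inv_sq_sub_le hn
  have hg_far : ∑' j, Aᶜ.indicator (g · ^ 2) j ≤ 4 :=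
    ((hg2.indicator Aᶜ).tsum_le_tsum (Set.indicator_le_self' fun j _ => sq_nonneg _) hg2).trans
      (hg_sq ▸ tsum_inv_sq_sub_le_four (2 * n))
  rw [hreindex]
  refine (tsum_mul_le_sqrt_mul_sqrt_add_compl A hx (fun j => inv_nonneg.mpr (abs_nonneg _))
    hx2 hg2).trans ?_
  have hsqrt_four : √(4 : ℝ) = 2 := by
    rw [show (4 : ℝ) = 2 ^ 2 by norm_num, sqrt_sq zero_le_two]
  rw [hx_far, mul_comm (√(2 / |(n : ℝ)|))]
  exact add_le_add
    (mul_le_mul (sqrt_le_sqrt hx_near) (sqrt_le_sqrt hg_near) (sqrt_nonneg _) (sqrt_nonneg _))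
    ((mul_le_mul_of_nonneg_left ((sqrt_le_sqrt hg_far).trans_eq hsqrt_four)
      (sqrt_nonneg _)).trans_eq (mul_comm _ _))

theorem tsum_ite_even {α : Type*} [AddCommMonoid α] [TopologicalSpace α] (F : ℤ → α) :
    ∑' k, (if Even k then F k else 0) = ∑' i, F (2 * i) := by
  have hsupp : Function.support (fun k => if Even k then F k else 0) ⊆ Set.range (2 * ·) := by
    intro k hk
    by_cases hk2 : Even k
    · obtain ⟨i, rfl⟩ := hk2.two_dvd
      exact ⟨i, rfl⟩
    · simp [hk2] at hk
  rw [← (mul_right_injective₀ two_ne_zero).tsum_eq hsupp]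
  simp

theorem tsum_ite_even_div_abs_sub (r : ℤ → ℝ) (n : ℤ) :
    (∑' k, if Even k ∧ k ≠ 2 * n then r (2 * n + k) / (|2 * n - k| : ℤ) else 0) =
      (∑' i, r (2 * (n + i)) / (|n - i| : ℤ)) / 2 := by
  -- the excluded term `k = 2n` is `r (4n) / 0 = 0` anyway
  have hdiag (k : ℤ) : (if Even k ∧ k ≠ 2 * n then r (2 * n + k) / (|2 * n - k| : ℤ) else 0) =
      if Even k then r (2 * n + k) / (|2 * n - k| : ℤ) else 0 := by
    by_cases hk : k = 2 * n <;> simp [hk]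
  rw [tsum_congr hdiag, tsum_ite_even, ← tsum_div_const]
  refine tsum_congr fun i => ?_
  rw [div_div, ← mul_sub, ← mul_add, abs_mul, abs_two]
  push_cast
  ring

theorem evenL2Norm_eq (r : ℤ → ℝ) : evenL2Norm r = √(∑' i, r (2 * i) ^ 2) := by
  rw [evenL2Norm, tsum_ite_even]

theorem evenTail_abs_two_mul (r : ℤ → ℝ) (n : ℤ) :
    evenTail r |2 * n| = √(∑' i, if |n| ≤ |i| then r (2 * i) ^ 2 else 0) := by
  simp only [evenTail, ite_and]
  rw [tsum_ite_even]
  simp [abs_mul]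

/-- For a nonnegative square-summable `r : 2ℤ → [0,∞)` and even `m ≠ 0`,
`Σ_{k∈2ℤ, k≠m} r(m+k)/|m−k| ≤ ‖r‖/√|m| + 2·𝓔_{|m|}(r)`. -/
theorem stmt9 (r : ℤ → ℝ) (hr : ∀ k, 0 ≤ r k)
    (hr2 : Summable fun k : ℤ => if Even k then r k ^ 2 else 0)
    (m : ℤ) (hm : Even m) (hm0 : m ≠ 0) :
    (∑' k : ℤ, if Even k ∧ k ≠ m then r (m + k) / (|m - k| : ℤ) else 0) ≤
      evenL2Norm r / Real.sqrt |(m : ℝ)| + 2 * evenTail r |m| := by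
  obtain ⟨n, rfl⟩ := hm.two_dvd
  have hn : n ≠ 0 := by rintro rfl; simp at hm0
  have hx2 : Summable fun i => r (2 * i) ^ 2 :=
    (hr2.comp_injective (mul_right_injective₀ (two_ne_zero' ℤ))).congr fun i => by simp
  have hcoef : √(2 / |(n : ℝ)|) / 2 = 1 / √|((2 * n : ℤ) : ℝ)| := by
    have hn' : 0 < |(n : ℝ)| := by positivity
    have h2 : √2 ^ 2 = 2 := sq_sqrt zero_le_two
    push_cast
    rw [abs_mul, abs_two, sqrt_div zero_le_two, sqrt_mul zero_le_two]
    field_simp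
    rw [h2]
  have hcore := tsum_div_abs_sub_le (fun i => hr (2 * i)) hx2 hn
  rw [tsum_ite_even_div_abs_sub, evenL2Norm_eq, evenTail_abs_two_mul]
  set N := √(∑' i, r (2 * i) ^ 2)
  set E := √(∑' i, if |n| ≤ |i| then r (2 * i) ^ 2 else 0)
  have hE : 0 ≤ E := sqrt_nonneg _
  calc (∑' i, r (2 * (n + i)) / (|n - i| : ℤ)) / 2 ≤ (√(2 / |(n : ℝ)|) * N + 2 * E) / 2 := by
        gcongr
    _ = N / √|((2 * n : ℤ) : ℝ)| + E := by rw [add_div, mul_div_right_comm, hcoef]; ring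
    _ ≤ N / √|((2 * n : ℤ) : ℝ)| + 2 * E := by linarith
end

section
/- Let Ω : ℤ → (0,∞) be a weight satisfying conditions (a0), (a2) and (a3). Then sup_{m∈ℤ} Σ_{k∈ℤ} Ω(m)²/(Ω(k)²·(1+(m−k)²)) < ∞. -/
/-!
Split the sum over `k` according to whether `|m| ≤ 2|k|`. If so, monotonicity of `Ω` in `|k|`
and the doubling condition (a2) give `Ω(m) ≤ C Ω(k)`, so the term is at most `C²/(1+(m-k)²)`,
whose sum over `k` does not depend on `m`. The remaining `O(|m|)` indices have `|k| < |m|/2`,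
hence `|m - k| ≥ |m|/2`, and with `Ω(k) ≥ Ω(0) ≥ 1` and the growth bound (a3) each such term
is at most `4D²(1+|m|)/(1+m²) = O(1/|m|)` (`D` the constant of (a3)), so together they
contribute `O(1)`.
-/

open Finset

namespace Function.Even

variable {α β : Type*} [AddCommGroup α] [LinearOrder α] {f : α → β}

lemma apply_abs (hf : f.Even) (a : α) : f |a| = f a := by
  rcases abs_choice a with h | h <;> simp only [h, hf a]

lemma le_of_abs_le [IsOrderedAddMonoid α] [Preorder β] (hf : f.Even)
    (hmono : MonotoneOn f (Set.Ici 0)) {a b : α} (h : |a| ≤ |b|) : f a ≤ f b := by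
  rw [← hf.apply_abs a, ← hf.apply_abs b]
  exact hmono (abs_nonneg a) (abs_nonneg b) h

end Function.Even

lemma sq_le_four_mul_sq_sub {x y : ℝ} (h : 2 * |y| ≤ |x|) : x ^ 2 ≤ 4 * (x - y) ^ 2 := by
  have hx : |x| ≤ 2 * |x - y| := by linarith [abs_sub_abs_le_abs_sub x y]
  nlinarith [sq_abs x, sq_abs (x - y), abs_nonneg x]

lemma summable_one_div_one_add_sq_int : Summable fun j : ℤ ↦ 1 / (1 + (j : ℝ) ^ 2) := by
  refine (Real.summable_one_div_int_pow.mpr one_lt_two).of_norm_bounded_eventually ?_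
  filter_upwards [Filter.eventually_cofinite_ne 0] with j hj
  have hj : (0 : ℝ) < (j : ℝ) ^ 2 := by positivity
  rw [Real.norm_of_nonneg (by positivity)]
  exact one_div_le_one_div_of_le hj (by linarith)

lemma hasSum_one_div_one_add_sq_sub (m : ℤ) :
    HasSum (fun k : ℤ ↦ 1 / (1 + ((m : ℝ) - k) ^ 2)) (∑' j : ℤ, 1 / (1 + (j : ℝ) ^ 2)) := by
  rw [← (Equiv.subLeft m).hasSum_iff]
  simpa [Function.comp_def] using summable_one_div_one_add_sq_int.hasSum

lemma hasSum_ite_mem_Icc_abs (m : ℤ) (B : ℝ) :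
    HasSum (fun k ↦ if k ∈ Icc (-|m|) |m| then B else 0) ((2 * |(m : ℝ)| + 1) * B) := by
  have hcard : (#(Icc (-|m|) |m|) : ℝ) = 2 * |(m : ℝ)| + 1 := by
    have h := Int.card_Icc_of_le (a := -|m|) (b := |m|) (by linarith [abs_nonneg m])
    rw [← Int.cast_natCast, h]
    push_cast
    ring
  have h := hasSum_sum_of_ne_finset_zero (L := .unconditional ℤ) (s := Icc (-|m|) |m|)
    (f := fun k ↦ if k ∈ Icc (-|m|) |m| then B else 0) fun k hk ↦ if_neg hk
  rwa [sum_ite_mem, inter_self, sum_const, nsmul_eq_mul, hcard] at h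

noncomputable def weightKernel (Ω : ℤ → ℝ) (m k : ℤ) : ℝ :=
  Ω m ^ 2 / (Ω k ^ 2 * (1 + ((m : ℝ) - k) ^ 2))

section WeightKernel

variable {Ω : ℤ → ℝ} {C D : ℝ} (m k : ℤ)

lemma weightKernel_nonneg : 0 ≤ weightKernel Ω m k := by
  unfold weightKernel
  positivity

lemma weightKernel_le_of_le_mul (hk : 0 < Ω k) (hm : 0 ≤ Ω m) (hmk : Ω m ≤ C * Ω k) :
    weightKernel Ω m k ≤ C ^ 2 * (1 / (1 + ((m : ℝ) - k) ^ 2)) := by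
  have hsq : Ω m ^ 2 ≤ C ^ 2 * Ω k ^ 2 := by
    rw [← mul_pow]
    exact pow_le_pow_left₀ hm hmk 2
  calc weightKernel Ω m k ≤ C ^ 2 * Ω k ^ 2 / (Ω k ^ 2 * (1 + ((m : ℝ) - k) ^ 2)) := by
        unfold weightKernel
        gcongr
    _ = C ^ 2 * (1 / (1 + ((m : ℝ) - k) ^ 2)) := by
        field_simp

lemma weightKernel_le_of_two_mul_abs_lt (hk : 1 ≤ Ω k) (hm : Ω m ^ 2 ≤ D ^ 2 * (1 + |(m : ℝ)|))
    (hkm : 2 * |k| < |m|) :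
    weightKernel Ω m k ≤ 4 * D ^ 2 * (1 + |(m : ℝ)|) / (1 + (m : ℝ) ^ 2) := by
  have hkm' : 2 * |(k : ℝ)| ≤ |(m : ℝ)| := by exact_mod_cast hkm.le
  have hden : (1 + (m : ℝ) ^ 2) / 4 ≤ Ω k ^ 2 * (1 + ((m : ℝ) - k) ^ 2) := by
    have := sq_le_four_mul_sq_sub hkm'
    have : 1 ≤ Ω k ^ 2 := one_le_pow₀ hk
    nlinarith [sq_nonneg ((m : ℝ) - k)]
  calc weightKernel Ω m k ≤ D ^ 2 * (1 + |(m : ℝ)|) / ((1 + (m : ℝ) ^ 2) / 4) :=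
        div_le_div₀ (by positivity) hm (by positivity) hden
    _ = 4 * D ^ 2 * (1 + |(m : ℝ)|) / (1 + (m : ℝ) ^ 2) := by
        field_simp

lemma weightKernel_le (hone : ∀ k, 1 ≤ Ω k) (hdoub : ∀ m k, |m| ≤ 2 * |k| → Ω m ≤ C * Ω k)
    (hm : Ω m ^ 2 ≤ D ^ 2 * (1 + |(m : ℝ)|)) :
    weightKernel Ω m k ≤
      (if k ∈ Icc (-|m|) |m| then 4 * D ^ 2 * (1 + |(m : ℝ)|) / (1 + (m : ℝ) ^ 2) else 0) +
        C ^ 2 * (1 / (1 + ((m : ℝ) - k) ^ 2)) := by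
  rcases lt_or_ge (2 * |k|) |m| with hkm | hkm
  · have hk : k ∈ Icc (-|m|) |m| := mem_Icc.mpr (abs_le.mp (by linarith [abs_nonneg k]))
    rw [if_pos hk]
    exact (weightKernel_le_of_two_mul_abs_lt m k (hone k) hm hkm).trans
      (le_add_of_nonneg_right (by positivity))
  · exact (weightKernel_le_of_le_mul m k (by linarith [hone k]) (by linarith [hone m])
      (hdoub m k hkm)).trans (le_add_of_nonneg_left (by positivity))

lemma summable_weightKernel_and_tsum_le (hone : ∀ k, 1 ≤ Ω k)
    (hdoub : ∀ m k, |m| ≤ 2 * |k| → Ω m ≤ C * Ω k)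
    (hgrowth : ∀ k : ℤ, Ω k ≤ D * √(1 + |(k : ℝ)|)) :
    Summable (weightKernel Ω m) ∧
      ∑' k, weightKernel Ω m k ≤ 16 * D ^ 2 + C ^ 2 * ∑' j : ℤ, 1 / (1 + (j : ℝ) ^ 2) := by
  have hm : Ω m ^ 2 ≤ D ^ 2 * (1 + |(m : ℝ)|) := by
    calc Ω m ^ 2 ≤ (D * √(1 + |(m : ℝ)|)) ^ 2 :=
          pow_le_pow_left₀ (by linarith [hone m]) (hgrowth m) 2
      _ = D ^ 2 * (1 + |(m : ℝ)|) := by rw [mul_pow, Real.sq_sqrt (by positivity)]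
  have hle k := weightKernel_le (C := C) m k hone hdoub hm
  have hmaj := (hasSum_ite_mem_Icc_abs m (4 * D ^ 2 * (1 + |(m : ℝ)|) / (1 + (m : ℝ) ^ 2))).add
    ((hasSum_one_div_one_add_sq_sub m).mul_left (C ^ 2))
  have hsum := hmaj.summable.of_nonneg_of_le (weightKernel_nonneg m) hle
  refine ⟨hsum, (hasSum_le hle hsum.hasSum hmaj).trans (add_le_add_left ?_ _)⟩
  -- (2a + 1)(1 + a) ≤ 4(1 + a²) for a = |m|
  rw [← sq_abs (m : ℝ), mul_div_assoc', div_le_iff₀ (by positivity)]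
  nlinarith [sq_nonneg D, mul_nonneg (sq_nonneg D) (sq_nonneg |(m : ℝ)|),
    mul_nonneg (sq_nonneg D) (sq_nonneg (|(m : ℝ)| - 1))]

end WeightKernel

theorem stmt14_general (Ω : ℤ → ℝ)
    (ha0₁ : 1 ≤ Ω 0) (ha0₂ : ∀ k, Ω (-k) = Ω k) (ha0₃ : ∀ k : ℤ, 0 ≤ k → Ω k ≤ Ω (k + 1))
    (ha2 : ∃ C > 0, ∀ k : ℤ, Ω (2 * k) ≤ C * Ω k)
    (ha3 : ∃ C > 0, ∀ k : ℤ, Ω k ≤ C * Real.sqrt (1 + |(k : ℝ)|)) :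
    ∃ S : ℝ, ∀ m : ℤ,
      (Summable fun k : ℤ => Ω m ^ 2 / (Ω k ^ 2 * (1 + ((m : ℝ) - k) ^ 2))) ∧
      (∑' k : ℤ, Ω m ^ 2 / (Ω k ^ 2 * (1 + ((m : ℝ) - k) ^ 2))) ≤ S := by
  obtain ⟨C, -, hC⟩ := ha2
  obtain ⟨D, -, hD⟩ := ha3
  have hmono : MonotoneOn Ω (Set.Ici 0) :=
    monotoneOn_of_le_add_one Set.ordConnected_Ici fun k _ hk _ ↦ ha0₃ k hk
  have habs {a b : ℤ} (h : |a| ≤ |b|) : Ω a ≤ Ω b :=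
    Function.Even.le_of_abs_le ha0₂ hmono h
  have hone (k : ℤ) : 1 ≤ Ω k := ha0₁.trans (habs (by simp))
  have hdoub (m k : ℤ) (h : |m| ≤ 2 * |k|) : Ω m ≤ C * Ω k :=
    (habs (by rwa [abs_mul, abs_two])).trans (hC k)
  exact ⟨_, fun m ↦ summable_weightKernel_and_tsum_le m hone hdoub hD⟩

/-- If a weight `Ω : ℤ → (0,∞)` satisfies (a0) (`Ω(0) ≥ 1`, symmetry,
monotonicity on `k ≥ 0`), (a2) (`Ω(2k) ≤ C·Ω(k)`) and (a3) (`Ω(k) ≤ C·√(1+|k|)`), then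
`sup_m Σ_k Ω(m)²/(Ω(k)²·(1+(m−k)²)) < ∞`. -/
theorem stmt14 (Ω : ℤ → ℝ) (hpos : ∀ k, 0 < Ω k)
    (ha0₁ : 1 ≤ Ω 0) (ha0₂ : ∀ k, Ω (-k) = Ω k) (ha0₃ : ∀ k : ℤ, 0 ≤ k → Ω k ≤ Ω (k + 1))
    (ha2 : ∃ C > 0, ∀ k : ℤ, Ω (2 * k) ≤ C * Ω k)
    (ha3 : ∃ C > 0, ∀ k : ℤ, Ω k ≤ C * Real.sqrt (1 + |(k : ℝ)|)) :
    ∃ S : ℝ, ∀ m : ℤ,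
      (Summable fun k : ℤ => Ω m ^ 2 / (Ω k ^ 2 * (1 + ((m : ℝ) - k) ^ 2))) ∧
      (∑' k : ℤ, Ω m ^ 2 / (Ω k ^ 2 * (1 + ((m : ℝ) - k) ^ 2))) ≤ S :=
  stmt14_general Ω ha0₁ ha0₂ ha0₃ ha2 ha3
end

section
/- For every α with 0 ≤ α < 1/2, the weight Ω(k) = (1+|k|)^α on ℤ satisfies conditions (a1), (a2) and (a3): in particular, there is M > 0 such that for all k ∈ ℤ and all n ∈ ℕ, ((1/(n+1))·Σ_{m=k}^{k+n} Ω(m)²)·((1/(n+1))·Σ_{m=k}^{k+n} Ω(m)^{−2}) ≤ M. -/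
/-!
With `β = 2α ∈ [0, 1)`, condition (a1) says that `(1 + |m|) ^ β` is a discrete `A₂` weight.
On the interval `k, …, k + L - 1` every `1 + |m|` lies within `L` of `a = 1 + |k|`. If `a ≥ 2L`
the weight varies by a factor at most `3 ^ β` on the interval. Otherwise it is at most
`(3L) ^ β` there, while the sum of its reciprocals is at most `2 ^ β` times the same sum over
`0, …, L - 1`, which is `O(L ^ (1 - β))` by concavity of `x ↦ x ^ (1 - β)`; the two bounds
multiply to `O(L²)`. Conditions (a2) and (a3) are monotonicity of `x ↦ x ^ α`.
-/

open Finset Real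

lemma mul_rpow_sub_one_le_rpow_sub_rpow {γ x : ℝ} (hγ0 : 0 ≤ γ) (hγ1 : γ ≤ 1) (hx : 1 ≤ x) :
    γ * x ^ (γ - 1) ≤ x ^ γ - (x - 1) ^ γ := by
  have hx0 : 0 < x := by linarith
  have hs : -1 ≤ -x⁻¹ := neg_le_neg (inv_le_one_of_one_le₀ hx)
  have hbern := rpow_one_add_le_one_add_mul_self hs hγ0 hγ1
  rw [show 1 + -x⁻¹ = (x - 1) / x by field_simp; ring, div_rpow (by linarith) hx0.le,
    div_le_iff₀ (rpow_pos_of_pos hx0 γ)] at hbern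
  rw [rpow_sub_one hx0.ne']
  have : (1 + γ * -x⁻¹) * x ^ γ = x ^ γ - γ * (x ^ γ / x) := by field_simp; ring
  linarith

lemma sum_range_inv_one_add_rpow_le {β : ℝ} (hβ0 : 0 ≤ β) (hβ1 : β < 1) (L : ℕ) :
    ∑ j ∈ range L, ((1 + j : ℝ) ^ β)⁻¹ ≤ (L : ℝ) ^ (1 - β) / (1 - β) := by
  have hγ : 0 < 1 - β := by linarith
  have htel := sum_range_sub (fun j : ℕ => (j : ℝ) ^ (1 - β)) L
  rw [Nat.cast_zero, zero_rpow hγ.ne', sub_zero] at htel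
  rw [le_div_iff₀ hγ, sum_mul, ← htel]
  refine sum_le_sum fun j _ => ?_
  have h := mul_rpow_sub_one_le_rpow_sub_rpow hγ.le (by linarith)
    (le_add_of_nonneg_right j.cast_nonneg : (1 : ℝ) ≤ 1 + j)
  rw [add_sub_cancel_left, sub_sub_cancel_left, rpow_neg (by positivity)] at h
  push_cast
  rw [add_comm (j : ℝ) 1]
  linarith

/-- Induction on `L`, peeling off the endpoint of larger absolute value: as
`|k| + |k + L| ≥ L`, it is at least `L / 2`. -/
lemma sum_range_abs_le_sum_range_half {φ : ℝ → ℝ} (hφ : AntitoneOn φ (Set.Ici 0))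
    (k : ℤ) (L : ℕ) :
    ∑ i ∈ range L, φ |((k + i : ℤ) : ℝ)| ≤ ∑ j ∈ range L, φ (j / 2) := by
  induction L generalizing k with
  | zero => simp
  | succ L ih =>
    have hends : (L : ℝ) ≤ |(k : ℝ)| + |((k + L : ℤ) : ℝ)| := by
      push_cast
      calc (L : ℝ) = |-(k : ℝ) + (k + L)| := by
            rw [neg_add_cancel_left, abs_of_nonneg (by positivity)]
        _ ≤ |-(k : ℝ)| + |(k : ℝ) + L| := abs_add_le _ _
        _ = _ := by rw [abs_neg]
    have hφ' : ∀ x : ℝ, (L : ℝ) / 2 ≤ x → φ x ≤ φ (L / 2) := fun x hx =>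
      hφ (by simp only [Set.mem_Ici]; positivity) (by simp only [Set.mem_Ici]; linarith) hx
    rw [sum_range_succ (fun j : ℕ => φ (j / 2))]
    rcases le_total ((L : ℝ) / 2) |((k + L : ℤ) : ℝ)| with hlast | hfirst
    · rw [sum_range_succ]
      exact add_le_add (ih k) (hφ' _ hlast)
    · rw [sum_range_succ']
      have hshift : ∑ i ∈ range L, φ |((k + (i + 1 : ℕ) : ℤ) : ℝ)| =
          ∑ i ∈ range L, φ |((k + 1 + i : ℤ) : ℝ)| :=
        sum_congr rfl fun i _ => by push_cast; ring_nf
      rw [hshift, Nat.cast_zero, add_zero]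
      exact add_le_add (ih (k + 1)) (hφ' _ (by linarith))

lemma sum_range_inv_one_add_abs_rpow_le {β : ℝ} (hβ0 : 0 ≤ β) (hβ1 : β < 1) (k : ℤ) (L : ℕ) :
    ∑ i ∈ range L, ((1 + |((k + i : ℤ) : ℝ)|) ^ β)⁻¹ ≤
      2 ^ β * ((L : ℝ) ^ (1 - β) / (1 - β)) := by
  have hanti : AntitoneOn (fun x : ℝ => ((1 + x) ^ β)⁻¹) (Set.Ici 0) := fun x hx y _ hxy => by
    simp only [Set.mem_Ici] at hx
    exact inv_anti₀ (by positivity) (rpow_le_rpow (by positivity) (by linarith) hβ0)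
  have hhalf : ∀ j : ℕ, ((1 + (j : ℝ) / 2) ^ β)⁻¹ ≤ 2 ^ β * ((1 + j : ℝ) ^ β)⁻¹ := fun j =>
    calc ((1 + (j : ℝ) / 2) ^ β)⁻¹ ≤ (((1 + j : ℝ) / 2) ^ β)⁻¹ :=
          inv_anti₀ (by positivity) (rpow_le_rpow (by positivity) (by linarith) hβ0)
      _ = 2 ^ β * ((1 + j : ℝ) ^ β)⁻¹ := by
          rw [div_rpow (by positivity) zero_le_two, inv_div, div_eq_mul_inv]
  calc ∑ i ∈ range L, ((1 + |((k + i : ℤ) : ℝ)|) ^ β)⁻¹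
      ≤ ∑ j ∈ range L, ((1 + (j : ℝ) / 2) ^ β)⁻¹ := sum_range_abs_le_sum_range_half hanti k L
    _ ≤ ∑ j ∈ range L, 2 ^ β * ((1 + j : ℝ) ^ β)⁻¹ := sum_le_sum fun j _ => hhalf j
    _ ≤ 2 ^ β * ((L : ℝ) ^ (1 - β) / (1 - β)) := by
      rw [← mul_sum]
      exact mul_le_mul_of_nonneg_left (sum_range_inv_one_add_rpow_le hβ0 hβ1 L) (by positivity)

theorem sum_one_add_abs_rpow_mul_sum_inv_le {β : ℝ} (hβ0 : 0 ≤ β) (hβ1 : β < 1) (k : ℤ) (L : ℕ) :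
    (∑ i ∈ range L, (1 + |((k + i : ℤ) : ℝ)|) ^ β) *
        ∑ i ∈ range L, ((1 + |((k + i : ℤ) : ℝ)|) ^ β)⁻¹ ≤ 6 / (1 - β) * L ^ 2 := by
  set a : ℝ := 1 + |(k : ℝ)| with ha
  have ha1 : 1 ≤ a := le_add_of_nonneg_right (abs_nonneg _)
  have hnear : ∀ i ∈ range L, |(1 + |((k + i : ℤ) : ℝ)|) - a| ≤ L := fun i hi => by
    have hi : (i : ℝ) ≤ L := by exact_mod_cast (mem_range.mp hi).le
    calc |(1 + |((k + i : ℤ) : ℝ)|) - a| = |(|(k : ℝ) + i| - |(k : ℝ)|)| := by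
          push_cast; rw [ha]; congr 1; ring
      _ ≤ |(k : ℝ) + i - k| := abs_abs_sub_abs_le_abs_sub _ _
      _ ≤ L := by rw [add_sub_cancel_left, Nat.abs_cast]; exact hi
  have hpow : ∀ c : ℝ, 1 ≤ c → c ^ β ≤ c := fun c hc => by
    simpa using rpow_le_rpow_of_exponent_le hc hβ1.le
  have hC : (0 : ℝ) < 1 - β := by linarith
  have hT0 : 0 ≤ ∑ i ∈ range L, ((1 + |((k + i : ℤ) : ℝ)|) ^ β)⁻¹ :=
    sum_nonneg fun i _ => by positivity
  have hlo : ∀ i ∈ range L, a - L ≤ 1 + |((k + i : ℤ) : ℝ)| := fun i hi =>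
    by linarith [(abs_le.mp (hnear i hi)).1]
  have hhi : ∀ i ∈ range L, 1 + |((k + i : ℤ) : ℝ)| ≤ a + L := fun i hi =>
    by linarith [(abs_le.mp (hnear i hi)).2]
  rcases le_or_gt (2 * L : ℝ) a with hfar | hclose
  · have hratio1 : 1 ≤ (a + L) / (a - L) := (one_le_div (by linarith)).mpr (by linarith)
    have hratio3 : (a + L) / (a - L) ≤ 3 := (div_le_iff₀ (by linarith)).mpr (by linarith)
    have hS : ∑ i ∈ range L, (1 + |((k + i : ℤ) : ℝ)|) ^ β ≤ L * (a + L) ^ β := by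
      refine (sum_le_card_nsmul _ _ ((a + L) ^ β) fun i hi => ?_).trans_eq (by simp)
      exact rpow_le_rpow (by positivity) (hhi i hi) hβ0
    have hT : ∑ i ∈ range L, ((1 + |((k + i : ℤ) : ℝ)|) ^ β)⁻¹ ≤ L * ((a - L) ^ β)⁻¹ := by
      refine (sum_le_card_nsmul _ _ ((a - L) ^ β)⁻¹ fun i hi => ?_).trans_eq (by simp)
      exact inv_anti₀ (rpow_pos_of_pos (by linarith) β)
        (rpow_le_rpow (by linarith) (hlo i hi) hβ0)
    calc _ ≤ (L * (a + L) ^ β) * (L * ((a - L) ^ β)⁻¹) :=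
          mul_le_mul hS hT hT0 (by positivity)
      _ = ((a + L) / (a - L)) ^ β * L ^ 2 := by
          rw [div_rpow (by positivity) (by linarith)]; ring
      _ ≤ 3 * L ^ 2 := by
          gcongr
          exact (hpow _ hratio1).trans hratio3
      _ ≤ 6 / (1 - β) * L ^ 2 := by
          gcongr
          rw [le_div_iff₀ hC]; linarith
  · have hL : (0 : ℝ) < L := by linarith
    have hS : ∑ i ∈ range L, (1 + |((k + i : ℤ) : ℝ)|) ^ β ≤ L * (3 * L) ^ β := by
      refine (sum_le_card_nsmul _ _ ((3 * L : ℝ) ^ β) fun i hi => ?_).trans_eq (by simp)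
      exact rpow_le_rpow (by positivity) (by linarith [hhi i hi]) hβ0
    have hT := sum_range_inv_one_add_abs_rpow_le hβ0 hβ1 k L
    have hsplit : (L : ℝ) ^ β * L ^ (1 - β) = L := by rw [← rpow_add hL]; simp
    calc _ ≤ (L * (3 * L) ^ β) * (2 ^ β * (L ^ (1 - β) / (1 - β))) :=
          mul_le_mul hS hT hT0 (by positivity)
      _ = 3 ^ β * 2 ^ β / (1 - β) * L ^ 2 := by
          rw [mul_rpow (by norm_num) hL.le]
          linear_combination (3 ^ β * 2 ^ β * L / (1 - β)) * hsplit
      _ ≤ 3 * 2 / (1 - β) * L ^ 2 := by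
          gcongr
          · exact hpow 3 (by norm_num)
          · exact hpow 2 (by norm_num)
      _ = 6 / (1 - β) * L ^ 2 := by norm_num

lemma one_add_abs_two_mul_rpow_le {α : ℝ} (hα0 : 0 ≤ α) (hα1 : α ≤ 1) (x : ℝ) :
    (1 + |2 * x|) ^ α ≤ 2 * (1 + |x|) ^ α :=
  calc (1 + |2 * x|) ^ α ≤ (2 * (1 + |x|)) ^ α :=
        rpow_le_rpow (by positivity) (by rw [abs_mul, abs_two]; linarith [abs_nonneg x]) hα0
    _ = 2 ^ α * (1 + |x|) ^ α := mul_rpow zero_le_two (by positivity)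
    _ ≤ 2 * (1 + |x|) ^ α := by
        gcongr
        simpa using rpow_le_rpow_of_exponent_le one_le_two hα1

/-- For `0 ≤ α < 1/2`, the weight `Ω(k) = (1+|k|)^α` satisfies
conditions (a1), (a2) and (a3). -/
theorem stmt15 (α : ℝ) (hα0 : 0 ≤ α) (hα : α < 1 / 2)
    (Ω : ℤ → ℝ) (hΩ : ∀ k : ℤ, Ω k = (1 + |(k : ℝ)|) ^ α) :
    (∃ M > 0, ∀ (k : ℤ) (n : ℕ),
      ((1 / (n + 1 : ℝ)) * ∑ i ∈ Finset.range (n + 1), Ω (k + i) ^ 2) *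
        ((1 / (n + 1 : ℝ)) * ∑ i ∈ Finset.range (n + 1), (Ω (k + i) ^ 2)⁻¹) ≤ M) ∧
    (∃ C > 0, ∀ k : ℤ, Ω (2 * k) ≤ C * Ω k) ∧
    (∃ C > 0, ∀ k : ℤ, Ω k ≤ C * Real.sqrt (1 + |(k : ℝ)|)) := by
  have hΩsq : ∀ m : ℤ, Ω m ^ 2 = (1 + |(m : ℝ)|) ^ (2 * α) := fun m => by
    rw [hΩ, ← rpow_natCast, ← rpow_mul (by positivity), mul_comm]; norm_num
  have hβ1 : 2 * α < 1 := by linarith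
  refine ⟨⟨6 / (1 - 2 * α), by bound, fun k n => ?_⟩, ⟨2, two_pos, fun k => ?_⟩,
    ⟨1, one_pos, fun k => ?_⟩⟩
  · have hA2 := sum_one_add_abs_rpow_mul_sum_inv_le (by positivity) hβ1 k (n + 1)
    rw [Nat.cast_succ] at hA2
    simp only [hΩsq]
    rw [← mul_mul_mul_comm, ← sq, one_div, inv_pow, inv_mul_le_iff₀ (by positivity)]
    linarith
  · rw [hΩ, hΩ]
    push_cast
    exact one_add_abs_two_mul_rpow_le hα0 (by linarith) k
  · rw [hΩ, sqrt_eq_rpow, one_mul]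
    exact rpow_le_rpow_of_exponent_le (le_add_of_nonneg_right (abs_nonneg _)) hα.le
end
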